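/- arXiv:2604.08721 — 12 statements merged into one kernel-verified Lean document; each statement's English description precedes it below -/
import Mathlib

section
/- Let p ≥ 2 be an even integer, κ < 0 and λ > 0 real numbers, and set c := (−κ/λ)^{1/p} > 0. Suppose y : [0,∞) → ℝ is differentiable and satisfies the scalar modal ODE ẏ(t) = κ·y(t) + λ·y(t)^{p+1} for all t ≥ 0 with |y(0)| < c. Then |y(t)| < c for all t ≥ 0 (forward invariance of the interval (−c, c)) and y(t) → 0 as t → ∞. -/
/-!
The vector field `κ x + λ x ^ (p + 1)` is odd for even `p`, so it suffices to fence a solution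
from above. Pick `|y 0| < b < c`; then `κ + λ b ^ p < 0`, and for a rate `0 < μ < -(κ + λ b ^ p)`
the curve `b e^{-μ t}` is a strict upper barrier: wherever `y` touches it, `0 < y ≤ b` gives
`ẏ = (κ + λ y ^ p) y ≤ (κ + λ b ^ p) y < -μ y`, the barrier's own slope. Hence
`|y t| ≤ b e^{-μ t}`, which yields both invariance and decay.
-/

open Filter Real Set

def modalField (κ lam : ℝ) (p : ℕ) (x : ℝ) : ℝ := κ * x + lam * x ^ (p + 1)

theorem modalField_neg {p : ℕ} (hp : Even p) (κ lam x : ℝ) :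
    modalField κ lam p (-x) = -modalField κ lam p x := by
  simp only [modalField, (hp.add_one).neg_pow]
  ring

theorem le_mul_exp_of_hasDerivAt_modalField {p : ℕ} {κ lam b μ : ℝ} (hlam : 0 ≤ lam)
    (hb : 0 < b) (hμ : 0 ≤ μ) (hrate : κ + lam * b ^ p < -μ) {y : ℝ → ℝ}
    (hy : ∀ t, 0 ≤ t → HasDerivAt y (modalField κ lam p (y t)) t) (hy0 : y 0 ≤ b) {t : ℝ}
    (ht : 0 ≤ t) : y t ≤ b * exp (-μ * t) := by
  have hbarrier (s : ℝ) : HasDerivAt (fun s => b * exp (-μ * s)) (-μ * (b * exp (-μ * s))) s := by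
    refine ((((hasDerivAt_id' s).const_mul (-μ)).exp).const_mul b).congr_deriv ?_
    ring
  refine image_le_of_deriv_right_lt_deriv_boundary
    (fun s hs => (hy s hs.1).continuousAt.continuousWithinAt)
    (fun s hs => (hy s hs.1).hasDerivWithinAt) (by simpa using hy0) hbarrier ?_ ⟨ht, le_rfl⟩
  rintro s ⟨hs, -⟩ hys
  have hys_pos : 0 < y s := hys ▸ by positivity
  have hys_le : y s ≤ b := hys ▸ mul_le_of_le_one_right hb.le
    (exp_le_one_iff.2 (by nlinarith))
  have hpow : lam * y s ^ p ≤ lam * b ^ p :=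
    mul_le_mul_of_nonneg_left (pow_le_pow_left₀ hys_pos.le hys_le p) hlam
  calc modalField κ lam p (y s) = (κ + lam * y s ^ p) * y s := by simp only [modalField]; ring
    _ ≤ (κ + lam * b ^ p) * y s := by gcongr
    _ < -μ * y s := by gcongr
    _ = -μ * (b * exp (-μ * s)) := by rw [hys]

theorem abs_le_mul_exp_of_hasDerivAt_modalField {p : ℕ} (hp : Even p) {κ lam b μ : ℝ}
    (hlam : 0 ≤ lam) (hb : 0 < b) (hμ : 0 ≤ μ) (hrate : κ + lam * b ^ p < -μ) {y : ℝ → ℝ}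
    (hy : ∀ t, 0 ≤ t → HasDerivAt y (modalField κ lam p (y t)) t) (hy0 : |y 0| ≤ b) {t : ℝ}
    (ht : 0 ≤ t) : |y t| ≤ b * exp (-μ * t) := by
  have hy_neg (s : ℝ) (hs : 0 ≤ s) : HasDerivAt (-y) (modalField κ lam p ((-y) s)) s := by
    simpa only [Pi.neg_apply, modalField_neg hp] using (hy s hs).neg
  refine abs_le.2 ⟨?_, le_mul_exp_of_hasDerivAt_modalField hlam hb hμ hrate hy (abs_le.1 hy0).2 ht⟩
  have := le_mul_exp_of_hasDerivAt_modalField hlam hb hμ hrate hy_neg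
    (neg_le.2 (abs_le.1 hy0).1) ht
  simp only [Pi.neg_apply] at this
  linarith

/-- For even p, κ < 0 < λ, the interval (−c, c) with c = (−κ/λ)^{1/p}
is forward invariant and attracts to the origin. -/
theorem stmt_5 (p : ℕ) (hp : 2 ≤ p) (hpe : Even p) (κ lam : ℝ)
    (hκ : κ < 0) (hlam : 0 < lam)
    (c : ℝ) (hc : c = ((-κ) / lam) ^ ((1 : ℝ) / (p : ℝ)))
    (y : ℝ → ℝ)
    (hy : ∀ t : ℝ, 0 ≤ t → HasDerivAt y (κ * y t + lam * y t ^ (p + 1)) t)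
    (hy0 : |y 0| < c) :
    (∀ t : ℝ, 0 ≤ t → |y t| < c)
    ∧ Filter.Tendsto y Filter.atTop (nhds 0) := by
  have hcp : c ^ p = -κ / lam := by
    rw [hc, one_div, rpow_inv_natCast_pow (div_pos (neg_pos.2 hκ) hlam).le (by omega)]
  set b := (|y 0| + c) / 2
  have hyb : |y 0| < b := by simp only [b]; linarith
  have hbc : b < c := by simp only [b]; linarith
  have hb : 0 < b := (abs_nonneg _).trans_lt hyb
  obtain ⟨μ, hμ, hrate⟩ : ∃ μ, 0 < μ ∧ κ + lam * b ^ p < -μ := by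
    have : lam * b ^ p < lam * c ^ p := by gcongr
    rw [hcp, mul_div_cancel₀ _ hlam.ne'] at this
    exact ⟨-(κ + lam * b ^ p) / 2, by linarith, by linarith⟩
  have hbound (t : ℝ) (ht : 0 ≤ t) : |y t| ≤ b * exp (-μ * t) :=
    abs_le_mul_exp_of_hasDerivAt_modalField hpe hlam.le hb hμ.le hrate hy hyb.le ht
  refine ⟨fun t ht => (hbound t ht).trans_lt ?_, ?_⟩
  · calc b * exp (-μ * t) ≤ b := mul_le_of_le_one_right hb.le (exp_le_one_iff.2 (by nlinarith))
      _ < c := hbc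
  · refine squeeze_zero_norm' (eventually_ge_atTop 0 |>.mono hbound) ?_
    simpa using (tendsto_exp_atBot.comp
      (tendsto_id.const_mul_atTop_of_neg (neg_lt_zero.2 hμ))).const_mul b
end

section
/- Let k ≥ 4 be an even integer and set p := k − 2 (even). Let {v_1,…,v_n} be an orthonormal basis of ℝ^n and κ_r < 0, λ_r ∈ ℝ for r = 1,…,n. For each r with λ_r > 0 set c_r := (−κ_r/λ_r)^{1/p}, and define ℛ_even := { x₀ ∈ ℝ^n : |⟨v_r, x₀⟩| < c_r for all r with λ_r > 0 }. Then for every differentiable solution x : [0,∞) → ℝ^n of ẋ(t) = Σ_{r=1}^n (κ_r·⟨v_r, x(t)⟩ + λ_r·⟨v_r, x(t)⟩^{k-1})·v_r with x(0) ∈ ℛ_even, one has x(t) ∈ ℛ_even for all t ≥ 0 and x(t) → 0 as t → ∞. -/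
/-! In the frame `v` the system decouples: each mode `y = ⟪v r, x⟫` solves
`y' = y (κ + λ y ^ p)`, and `x 0 ∈ ℛ_even` says exactly that `κ + λ y(0) ^ p < 0` for every mode
(automatically so when `λ ≤ 0`, as `κ < 0` and `p` is even). For `g = y ^ 2` this reads
`g' = 2 g (κ + λ g ^ (p / 2))`; a fence argument shows that `g` never rises above `g 0`, so
`κ + λ y ^ p` stays below `μ := max κ (κ + λ y(0) ^ p) < 0`, and Grönwall gives
`g t ≤ g 0 * exp (2 μ t)`. -/

open Set Filter Topology Real

theorem image_le_of_deriv_nonpos_of_mem_Ioo {g G : ℝ → ℝ} {A B : ℝ} (hAB : A < B)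
    (hg : ∀ t, 0 ≤ t → HasDerivAt g (G t) t)
    (hG : ∀ t, 0 ≤ t → g t ∈ Ioo A B → G t ≤ 0) (h0 : g 0 ≤ A) {T : ℝ} (hT : 0 ≤ T) :
    g T ≤ A := by
  refine le_of_forall_pos_lt_add fun δ hδ => ?_
  obtain ⟨ε, hε, hεδ, hεB⟩ : ∃ ε, 0 < ε ∧ ε * (1 + T) < δ ∧ ε * (1 + T) < B - A := by
    set η := min δ (B - A)
    have hη : 0 < η := lt_min hδ (by linarith)
    refine ⟨η / (2 * (1 + T)), by positivity, ?_, ?_⟩ <;>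
      · have : η / (2 * (1 + T)) * (1 + T) = η / 2 := by field_simp
        linarith [min_le_left δ (B - A), min_le_right δ (B - A)]
  -- While the fence `A + ε * (1 + t)` stays below `B`, `g` cannot cross it.
  have hfence : g T ≤ A + ε * (1 + T) := by
    refine image_le_of_deriv_right_lt_deriv_boundary (a := 0) (b := T)
      (B := fun t => A + ε * (1 + t)) (B' := fun _ => ε)
      (fun t ht => (hg t ht.1).continuousAt.continuousWithinAt)
      (fun t ht => (hg t ht.1).hasDerivWithinAt) (by simp; linarith)
      (fun t => by simpa using (((hasDerivAt_id t).const_add 1).const_mul ε).const_add A)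
      (fun t ht hgt => ?_) ⟨hT, le_rfl⟩
    have : ε * (1 + t) ≤ ε * (1 + T) := by gcongr; exact ht.2.le
    have : 0 < ε * (1 + t) := by nlinarith [ht.1]
    exact (hG t ht.1 ⟨by linarith, by linarith⟩).trans_lt hε
  linarith

theorem le_mul_exp_of_hasDerivAt_le_mul {g G : ℝ → ℝ} {a : ℝ}
    (hg : ∀ t, 0 ≤ t → HasDerivAt g (G t) t) (hG : ∀ t, 0 ≤ t → G t ≤ a * g t)
    {T : ℝ} (hT : 0 ≤ T) : g T ≤ g 0 * exp (a * T) := by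
  have := le_gronwallBound_of_liminf_deriv_right_le (f := g) (δ := g 0) (K := a) (ε := 0)
    (a := 0) (b := T) (fun t ht => (hg t ht.1).continuousAt.continuousWithinAt)
    (fun t ht _ hr => (hg t ht.1).hasDerivWithinAt.liminf_right_slope_le hr) le_rfl
    (fun t ht => by simpa using hG t ht.1) T ⟨hT, le_rfl⟩
  simpa [gronwallBound_ε0] using this

theorem OrthonormalBasis.hasDerivAt_inner {ι E : Type*} [Fintype ι] [NormedAddCommGroup E]
    [InnerProductSpace ℝ E] (v : OrthonormalBasis ι ℝ E) {x : ℝ → E} {f : ι → ℝ} {t : ℝ}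
    (hx : HasDerivAt x (∑ s, f s • v s) t) (r : ι) :
    HasDerivAt (fun t => inner ℝ (v r) (x t)) (f r) t := by
  have := (innerSL ℝ (v r)).hasFDerivAt.comp_hasDerivAt t hx
  rwa [innerSL_apply_apply, v.orthonormal.inner_right_fintype] at this

theorem add_mul_pow_le_max (κ l : ℝ) (m : ℕ) {s a : ℝ} (hs : 0 ≤ s) (hsa : s ≤ a) :
    κ + l * s ^ m ≤ max κ (κ + l * a ^ m) := by
  rcases le_total l 0 with hl | hl
  · exact le_max_of_le_left (by nlinarith [pow_nonneg hs m])
  · exact le_max_of_le_right (by gcongr)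

theorem add_mul_pow_neg_of_abs_lt_rpow {κ l a : ℝ} {p : ℕ} (hκ : κ < 0) (hl : 0 < l)
    (hp : Even p) (hp0 : p ≠ 0) (ha : |a| < (-κ / l) ^ ((1 : ℝ) / p)) : κ + l * a ^ p < 0 := by
  have hc : ((-κ / l) ^ ((1 : ℝ) / p)) ^ p = -κ / l := by
    rw [one_div, Real.rpow_inv_natCast_pow (div_pos (neg_pos.2 hκ) hl).le hp0]
  have : a ^ p < -κ / l := by
    rw [← hp.pow_abs, ← hc]
    exact pow_lt_pow_left₀ ha (abs_nonneg a) hp0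
  have : l * a ^ p < -κ := by rwa [lt_div_iff₀' hl] at this
  linarith

namespace ODECO

variable {y : ℝ → ℝ} {κ l : ℝ} {m : ℕ}

theorem hasDerivAt_sq {t : ℝ} (hy : HasDerivAt y (κ * y t + l * y t ^ (2 * m + 1)) t) :
    HasDerivAt (fun t => y t ^ 2) (2 * y t ^ 2 * (κ + l * (y t ^ 2) ^ m)) t :=
  (hy.fun_pow 2).congr_deriv (by ring)

theorem sq_le_sq_zero (hy : ∀ t, 0 ≤ t → HasDerivAt y (κ * y t + l * y t ^ (2 * m + 1)) t)
    (h0 : κ + l * y 0 ^ (2 * m) < 0) {t : ℝ} (ht : 0 ≤ t) : y t ^ 2 ≤ y 0 ^ 2 := by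
  rw [pow_mul] at h0
  have hφ : ∀ᶠ s in 𝓝 (y 0 ^ 2), κ + l * s ^ m < 0 :=
    (continuous_const.add (continuous_const.mul (continuous_pow m))).continuousAt.eventually_lt
      continuousAt_const h0
  obtain ⟨B, hB, hBφ⟩ := exists_Ico_subset_of_mem_nhds hφ (exists_gt _)
  refine image_le_of_deriv_nonpos_of_mem_Ioo hB (fun t ht => hasDerivAt_sq (hy t ht))
    (fun t _ hgt => ?_) le_rfl ht
  exact mul_nonpos_of_nonneg_of_nonpos (by positivity) (hBφ (Ioo_subset_Ico_self hgt)).le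

theorem tendsto_zero (hy : ∀ t, 0 ≤ t → HasDerivAt y (κ * y t + l * y t ^ (2 * m + 1)) t)
    (h0 : κ + l * y 0 ^ (2 * m) < 0) (hκ : κ < 0) : Tendsto y atTop (𝓝 0) := by
  set μ := max κ (κ + l * (y 0 ^ 2) ^ m)
  have hμ : μ < 0 := max_lt hκ (by rwa [← pow_mul])
  have hdecay : ∀ t, 0 ≤ t → y t ^ 2 ≤ y 0 ^ 2 * exp (2 * μ * t) := by
    refine fun t ht => le_mul_exp_of_hasDerivAt_le_mul (fun t ht => hasDerivAt_sq (hy t ht))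
      (fun t ht => ?_) ht
    have := add_mul_pow_le_max κ l m (sq_nonneg (y t)) (sq_le_sq_zero hy h0 ht)
    nlinarith [sq_nonneg (y t)]
  have hexp : Tendsto (fun t => y 0 ^ 2 * exp (2 * μ * t)) atTop (𝓝 0) := by
    simpa using (tendsto_exp_atBot.comp
      (tendsto_id.const_mul_atTop_of_neg (by linarith : 2 * μ < 0))).const_mul (y 0 ^ 2)
  have hsq : Tendsto (fun t => y t ^ 2) atTop (𝓝 0) :=
    tendsto_of_tendsto_of_tendsto_of_le_of_le' tendsto_const_nhds hexp
      (Eventually.of_forall fun t => sq_nonneg _)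
      ((eventually_ge_atTop 0).mono hdecay)
  rw [tendsto_zero_iff_abs_tendsto_zero]
  simpa [sqrt_sq_eq_abs, Function.comp_def] using hsq.sqrt

end ODECO

/-- Even-degree region of attraction ℛ_even is forward invariant and
attracts to the origin. -/
theorem stmt_6 (k n : ℕ) (hk : 4 ≤ k) (hke : Even k)
    (v : OrthonormalBasis (Fin n) ℝ (EuclideanSpace ℝ (Fin n)))
    (κ lam : Fin n → ℝ) (hκ : ∀ r, κ r < 0)
    (p : ℕ) (hp : p = k - 2)
    (c : Fin n → ℝ)
    (hc : ∀ r, 0 < lam r → c r = ((-κ r) / lam r) ^ ((1 : ℝ) / (p : ℝ)))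
    (R : Set (EuclideanSpace ℝ (Fin n)))
    (hR : R = {x₀ | ∀ r, 0 < lam r → |(inner ℝ (v r) x₀ : ℝ)| < c r})
    (x : ℝ → EuclideanSpace ℝ (Fin n))
    (hx : ∀ t : ℝ, 0 ≤ t →
      HasDerivAt x
        (∑ r, (κ r * (inner ℝ (v r) (x t) : ℝ)
          + lam r * (inner ℝ (v r) (x t) : ℝ) ^ (k - 1)) • v r) t)
    (hx0 : x 0 ∈ R) :
    (∀ t : ℝ, 0 ≤ t → x t ∈ R)
    ∧ Filter.Tendsto x Filter.atTop (nhds 0) := by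
  obtain ⟨m, rfl⟩ : ∃ m, p = 2 * m := hp ▸ (hke.tsub even_two).exists_two_nsmul _
  have hk1 : k - 1 = 2 * m + 1 := by omega
  subst hR
  set y : Fin n → ℝ → ℝ := fun r t => inner ℝ (v r) (x t)
  have hy : ∀ r t, 0 ≤ t → HasDerivAt (y r) (κ r * y r t + lam r * y r t ^ (2 * m + 1)) t :=
    fun r t ht => hk1 ▸ v.hasDerivAt_inner (hx t ht) r
  have hy0 : ∀ r, κ r + lam r * y r 0 ^ (2 * m) < 0 := by
    intro r
    rcases lt_or_ge 0 (lam r) with hl | hl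
    · exact add_mul_pow_neg_of_abs_lt_rpow (hκ r) hl (even_two_mul m) (by omega)
        (hc r hl ▸ hx0 r hl)
    · nlinarith [hκ r, (even_two_mul m).pow_nonneg (y r 0)]
  refine ⟨fun t ht r hl => ?_, ?_⟩
  · exact (sq_le_sq.1 (ODECO.sq_le_sq_zero (hy r) (hy0 r) ht)).trans_lt (hx0 r hl)
  · have := tendsto_finsetSum Finset.univ fun r _ =>
      (ODECO.tendsto_zero (hy r) (hy0 r) (hκ r)).smul_const (v r)
    simpa [y, v.sum_repr'] using this
end

section
/- Let p ≥ 1 be an odd integer, κ < 0 and λ > 0 real numbers, and set c := (−κ/λ)^{1/p} > 0. Suppose y : [0,∞) → ℝ is differentiable and satisfies the scalar modal ODE ẏ(t) = κ·y(t) + λ·y(t)^{p+1} for all t ≥ 0 with y(0) < c. Then y(t) < c for all t ≥ 0 (forward invariance of the half-line (−∞, c)) and y(t) → 0 as t → ∞. -/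
open Set Filter Real

/-!
Write `F x = κ x + λ x^(p+1) = (κ + λ x^p) x`, so that `0` and `c` are equilibria. `F` is locally
Lipschitz, so by uniqueness a solution cannot reach an equilibrium it did not start at; with the
intermediate value theorem, `y` stays below `c`. Since `x ↦ x^p` is increasing for odd `p`, a bound
`y ≤ m` gives `y F(y) ≤ (κ + λ m^p) y²`, and Grönwall applied to `y²` yields
`|y t| ≤ |y 0| e^{(κ + λ m^p) t}`. With `m = c` the rate vanishes, so `|y|` does not increase; as
`y` also stays below the equilibrium `0` when `y 0 < 0`, we get `y ≤ max (y 0) 0`. With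
`m = max (y 0) 0 < c` the rate is negative and `y → 0`.
-/

/-- Backward uniqueness, comparing `y` with the constant solution `a` on `[0, s]`. -/
theorem eq_of_hasDerivAt_of_apply_eq_zero {F y : ℝ → ℝ} {a s : ℝ} (hF : LocallyLipschitz F)
    (ha : F a = 0) (hy : ∀ t, 0 ≤ t → HasDerivAt y (F (y t)) t) (hs : 0 ≤ s) (hys : y s = a) :
    y 0 = a := by
  have hyc : ContinuousOn y (Icc 0 s) := fun t ht => (hy t ht.1).continuousAt.continuousWithinAt
  obtain ⟨K, hK⟩ := hF.locallyLipschitzOn.exists_lipschitzOnWith_of_compact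
    ((isCompact_Icc.image_of_continuousOn hyc).insert a)
  refine ODE_solution_unique_of_mem_Icc_left (v := fun _ => F)
    (s := fun _ => insert a (y '' Icc 0 s)) (g := fun _ => a) (fun _ _ => hK) hyc
    (fun t ht => (hy t ht.1.le).hasDerivWithinAt)
    (fun t ht => mem_insert_of_mem _ (mem_image_of_mem y (Ioc_subset_Icc_self ht)))
    continuousOn_const (fun t _ => by simpa [ha] using hasDerivWithinAt_const t (Iic t) a)
    (fun _ _ => mem_insert a _) hys ⟨le_rfl, hs⟩

theorem lt_of_hasDerivAt_of_lt {F y : ℝ → ℝ} {a t : ℝ} (hF : LocallyLipschitz F)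
    (ha : F a = 0) (hy : ∀ t, 0 ≤ t → HasDerivAt y (F (y t)) t) (h0 : y 0 < a) (ht : 0 ≤ t) :
    y t < a := by
  by_contra! hat
  obtain ⟨s, hs, hys⟩ := intermediate_value_Icc ht
    (fun u hu => (hy u hu.1).continuousAt.continuousWithinAt) ⟨h0.le, hat⟩
  exact h0.ne (eq_of_hasDerivAt_of_apply_eq_zero hF ha hy hs.1 hys)

theorem abs_le_abs_mul_exp_of_hasDerivAt {y y' : ℝ → ℝ} {K t : ℝ}
    (hy : ∀ t, 0 ≤ t → HasDerivAt y (y' t) t) (hK : ∀ t, 0 ≤ t → y t * y' t ≤ K * y t ^ 2)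
    (ht : 0 ≤ t) : |y t| ≤ |y 0| * exp (K * t) := by
  have hsq : ∀ u, 0 ≤ u → HasDerivAt (fun u => y u ^ 2) (2 * y u * y' u) u := fun u hu => by
    simpa using (hy u hu).fun_pow 2
  have h := le_gronwallBound_of_liminf_deriv_right_le (f := fun u => y u ^ 2) (K := 2 * K)
    (ε := 0) (δ := y 0 ^ 2) (a := 0) (b := t)
    (fun u hu => (hsq u hu.1).continuousAt.continuousWithinAt)
    (fun u hu r hr => (hsq u hu.1).hasDerivWithinAt.liminf_right_slope_le hr) le_rfl
    (fun u hu => by linarith [hK u hu.1]) t ⟨ht, le_rfl⟩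
  rw [gronwallBound_ε0, sub_zero] at h
  have : y t ^ 2 ≤ (|y 0| * exp (K * t)) ^ 2 := by
    rwa [mul_pow, sq_abs, ← exp_nat_mul, ← mul_assoc, Nat.cast_ofNat]
  simpa [abs_mul] using sq_le_sq.1 this

theorem mul_add_mul_pow_succ_le {p : ℕ} (hp : Odd p) {κ lam x m : ℝ} (hlam : 0 ≤ lam)
    (hx : x ≤ m) : x * (κ * x + lam * x ^ (p + 1)) ≤ (κ + lam * m ^ p) * x ^ 2 := by
  have hxm : lam * x ^ p ≤ lam * m ^ p := mul_le_mul_of_nonneg_left (hp.pow_le_pow.2 hx) hlam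
  have : x * (κ * x + lam * x ^ (p + 1)) = (κ + lam * x ^ p) * x ^ 2 := by ring
  rw [this]
  exact mul_le_mul_of_nonneg_right (by linarith) (sq_nonneg x)

/-- For odd p, κ < 0 < λ, the half-line (−∞, c) with c = (−κ/λ)^{1/p}
is forward invariant and attracts to the origin. -/
theorem stmt_7 (p : ℕ) (hp : 1 ≤ p) (hpo : Odd p) (κ lam : ℝ)
    (hκ : κ < 0) (hlam : 0 < lam)
    (c : ℝ) (hc : c = ((-κ) / lam) ^ ((1 : ℝ) / (p : ℝ)))
    (y : ℝ → ℝ)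
    (hy : ∀ t : ℝ, 0 ≤ t → HasDerivAt y (κ * y t + lam * y t ^ (p + 1)) t)
    (hy0 : y 0 < c) :
    (∀ t : ℝ, 0 ≤ t → y t < c)
    ∧ Filter.Tendsto y Filter.atTop (nhds 0) := by
  set F : ℝ → ℝ := fun x => κ * x + lam * x ^ (p + 1)
  have hF : LocallyLipschitz F := (by fun_prop : ContDiff ℝ 1 F).locallyLipschitz
  have hcp : lam * c ^ p = -κ := by
    rw [hc, one_div, rpow_inv_natCast_pow (div_pos (neg_pos.2 hκ) hlam).le (by omega)]
    field_simp
  have hFc : F c = 0 := by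
    simp only [F, pow_succ, ← mul_assoc, hcp]
    ring
  have hbelow : ∀ t, 0 ≤ t → y t < c := fun t ht => lt_of_hasDerivAt_of_lt hF hFc hy hy0 ht
  refine ⟨hbelow, ?_⟩
  set m := max (y 0) 0
  have hle : ∀ t, 0 ≤ t → y t ≤ m := by
    intro t ht
    rcases lt_or_ge (y 0) 0 with hneg | hnonneg
    · exact (lt_of_hasDerivAt_of_lt hF (by simp [F]) hy hneg ht).le.trans (le_max_right _ _)
    · have := abs_le_abs_mul_exp_of_hasDerivAt (K := 0) hy (fun u hu => by
        simpa [hcp] using mul_add_mul_pow_succ_le (κ := κ) hpo hlam.le (hbelow u hu).le) ht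
      rw [zero_mul, exp_zero, mul_one, abs_of_nonneg hnonneg] at this
      exact (le_abs_self _).trans (this.trans (le_max_left _ _))
  set K := κ + lam * m ^ p
  have hK : K < 0 := by
    have hc0 : 0 < c := hc ▸ rpow_pos_of_pos (div_pos (neg_pos.2 hκ) hlam) _
    have : m ^ p < c ^ p := hpo.strictMono_pow (max_lt hy0 hc0)
    linarith [mul_lt_mul_of_pos_left this hlam]
  have hdecay : Tendsto (fun t => |y 0| * exp (K * t)) atTop (nhds 0) := by
    simpa using (tendsto_exp_atBot.comp (tendsto_id.const_mul_atTop_of_neg hK)).const_mul |y 0|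
  refine squeeze_zero_norm' ?_ hdecay
  filter_upwards [eventually_ge_atTop 0] with t ht
  exact abs_le_abs_mul_exp_of_hasDerivAt hy
    (fun u hu => mul_add_mul_pow_succ_le hpo hlam.le (hle u hu)) ht
end

section
/- Let p ≥ 1 be an odd integer, κ < 0 and λ < 0 real numbers, and let c be the unique real root of κ + λ s^p = 0, so that c < 0. Suppose y : [0,∞) → ℝ is differentiable and satisfies the scalar modal ODE ẏ(t) = κ·y(t) + λ·y(t)^{p+1} for all t ≥ 0 with y(0) > c. Then y(t) > c for all t ≥ 0 (forward invariance of the half-line (c, ∞)) and y(t) → 0 as t → ∞. -/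
open Set Filter

/-- Representation of solutions of a scalar linear ODE on `[0, ∞)`. -/
lemma lin_rep (z a : ℝ → ℝ) (ha : Continuous a)
    (hz : ∀ t : ℝ, 0 ≤ t → HasDerivAt z (a t * z t) t) :
    ∀ t : ℝ, 0 ≤ t → z t = z 0 * Real.exp (∫ s in (0:ℝ)..t, a s) := by
  intro T hT
  set A : ℝ → ℝ := fun t => ∫ s in (0:ℝ)..t, a s with hA
  have hAd : ∀ t : ℝ, HasDerivAt A (a t) t := fun t =>
    (ha.integral_hasStrictDerivAt 0 t).hasDerivAt
  set F : ℝ → ℝ := fun t => z t * Real.exp (-A t) with hF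
  have hFd : ∀ t : ℝ, 0 ≤ t → HasDerivAt F 0 t := by
    intro t ht
    have h1 : HasDerivAt (fun u => Real.exp (-A u)) (Real.exp (-A t) * (-(a t))) t :=
      ((hAd t).neg).exp
    have h2 : HasDerivAt (fun u => z u * Real.exp (-A u)) _ t := (hz t ht).mul h1
    convert h2 using 1
    ring
  have hcont : ContinuousOn F (Icc 0 T) := fun x hx =>
    (hFd x hx.1).continuousAt.continuousWithinAt
  have := constant_of_has_deriv_right_zero hcont
    (fun x hx => (hFd x hx.1).hasDerivWithinAt) T (by simp [hT])
  have hF0 : F 0 = z 0 := by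
    simp [hF, hA, Real.exp_zero]
  have hFT : F T = z T * Real.exp (-A T) := rfl
  have hexp : Real.exp (-A T) * Real.exp (A T) = 1 := by
    rw [← Real.exp_add]; simp
  have : z T * Real.exp (-A T) = z 0 := by rw [← hF0, ← this]
  calc z T = z T * Real.exp (-A T) * Real.exp (A T) := by
        rw [mul_assoc, hexp, mul_one]
    _ = z 0 * Real.exp (A T) := by rw [this]

open Set Filter

/-- For odd p, κ < 0 and λ < 0, with c < 0 the unique real root of
κ + λ·s^p = 0, the half-line (c, ∞) is forward invariant and attracts to the origin. -/
theorem stmt_8 (p : ℕ) (hp : 1 ≤ p) (hpo : Odd p) (κ lam : ℝ)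
    (hκ : κ < 0) (hlam : lam < 0)
    (c : ℝ) (hcneg : c < 0) (hc : κ + lam * c ^ p = 0)
    (y : ℝ → ℝ)
    (hy : ∀ t : ℝ, 0 ≤ t → HasDerivAt y (κ * y t + lam * y t ^ (p + 1)) t)
    (hy0 : c < y 0) :
    (∀ t : ℝ, 0 ≤ t → c < y t)
    ∧ Filter.Tendsto y Filter.atTop (nhds 0) := by
  have hycont : ContinuousOn y (Ici 0) := fun t ht =>
    (hy t ht).continuousAt.continuousWithinAt
  have hYc : Continuous fun t : ℝ => y (max t 0) :=
    hycont.comp_continuous (continuous_id.max continuous_const)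
      (fun x => le_max_right x 0)
  -- Part 1 : invariance
  set a₁ : ℝ → ℝ := fun t =>
    κ + lam * ∑ i ∈ Finset.range (p + 1), y (max t 0) ^ i * c ^ (p - i) with ha₁def
  have ha₁c : Continuous a₁ :=
    continuous_const.add (continuous_const.mul
      (continuous_finset_sum _ fun i _ => (hYc.pow i).mul continuous_const))
  have hz₁ : ∀ t : ℝ, 0 ≤ t → HasDerivAt (fun t => y t - c) (a₁ t * (y t - c)) t := by
    intro t ht
    have h : HasDerivAt (fun t => y t - c) (κ * y t + lam * y t ^ (p + 1)) t := (hy t ht).sub_const c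
    convert h using 1
    have hmax : max t 0 = t := max_eq_left ht
    have hgeom := geom_sum₂_mul (y t) c (p + 1)
    have hcc : κ * c + lam * c ^ (p + 1) = 0 := by
      have h2 : κ * c + lam * c ^ (p + 1) = (κ + lam * c ^ p) * c := by ring
      rw [h2, hc, zero_mul]
    have hsum : (∑ i ∈ Finset.range (p + 1), y t ^ i * c ^ (p - i)) * (y t - c)
        = y t ^ (p + 1) - c ^ (p + 1) := by
      have : ∀ i ∈ Finset.range (p + 1), y t ^ i * c ^ (p - i) = y t ^ i * c ^ (p + 1 - 1 - i) := by
        intro i _; norm_num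
      rw [Finset.sum_congr rfl this, hgeom]
    simp only [ha₁def, hmax]
    rw [add_mul, mul_assoc, hsum]
    linarith [hcc]
  have key1 : ∀ t : ℝ, 0 ≤ t → c < y t := by
    intro t ht
    have := lin_rep (fun t => y t - c) a₁ ha₁c hz₁ t ht
    have hpos : (0:ℝ) < (y 0 - c) * Real.exp (∫ s in (0:ℝ)..t, a₁ s) :=
      mul_pos (by linarith) (Real.exp_pos _)
    linarith [this ▸ hpos]
  refine ⟨key1, ?_⟩
  -- sign preservation
  set a₂ : ℝ → ℝ := fun t => κ + lam * y (max t 0) ^ p with ha₂def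
  have ha₂c : Continuous a₂ :=
    continuous_const.add (continuous_const.mul (hYc.pow p))
  have hz₂ : ∀ t : ℝ, 0 ≤ t → HasDerivAt y (a₂ t * y t) t := by
    intro t ht
    convert hy t ht using 1
    have hmax : max t 0 = t := max_eq_left ht
    simp only [ha₂def, hmax]
    rw [pow_succ]
    ring
  have rep := lin_rep y a₂ ha₂c hz₂
  have hppos : 0 < p := hp
  rcases lt_trichotomy (y 0) 0 with h0 | h0 | h0
  · -- y 0 < 0 : trajectory stays in (c, 0), increases to 0
    have yneg : ∀ t : ℝ, 0 ≤ t → y t < 0 := by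
      intro t ht
      have := rep t ht
      nlinarith [Real.exp_pos (∫ s in (0:ℝ)..t, a₂ s), this]
    -- derivative is nonnegative on (c,0)
    have gneg : ∀ s : ℝ, c < s → κ + lam * s ^ p < 0 := by
      intro s hs
      have : c ^ p < s ^ p := hpo.strictMono_pow hs
      nlinarith
    have fpos : ∀ t : ℝ, 0 ≤ t → 0 < a₂ t * y t := by
      intro t ht
      have h1 := gneg (y t) (key1 t ht)
      have h2 := yneg t ht
      have hmax : max t 0 = t := max_eq_left ht
      have : a₂ t = κ + lam * y t ^ p := by simp [ha₂def, hmax]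
      rw [this]
      exact mul_pos_of_neg_of_neg h1 h2
    have hmono : MonotoneOn y (Ici 0) := by
      apply monotoneOn_of_hasDerivWithinAt_nonneg (convex_Ici 0) hycont
        (f' := fun t => a₂ t * y t)
      · intro x hx
        rw [interior_Ici] at hx ⊢
        exact (hz₂ x (le_of_lt hx)).hasDerivWithinAt
      · intro x hx
        rw [interior_Ici] at hx
        exact (fpos x (le_of_lt hx)).le
    set Y : ℝ → ℝ := fun t => y (max t 0) with hYdef
    have hYmono : Monotone Y := fun s t hst =>
      hmono (le_max_right s 0) (le_max_right t 0) (max_le_max hst le_rfl)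
    have hYbdd : BddAbove (range Y) := ⟨0, by
      rintro _ ⟨t, rfl⟩
      exact (yneg (max t 0) (le_max_right t 0)).le⟩
    have hYlim := tendsto_atTop_ciSup hYmono hYbdd
    set L : ℝ := ⨆ t, Y t with hLdef
    have hylim : Tendsto y atTop (nhds L) := by
      refine hYlim.congr' ?_
      filter_upwards [eventually_ge_atTop (0:ℝ)] with t ht
      simp [hYdef, max_eq_left ht]
    have hLle : L ≤ 0 := ciSup_le fun t => (yneg (max t 0) (le_max_right t 0)).le
    have hyleL : ∀ t : ℝ, 0 ≤ t → y t ≤ L := by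
      intro t ht
      have := le_ciSup hYbdd t
      simpa [hYdef, max_eq_left ht] using this
    have hL0 : L = 0 := by
      by_contra hne
      have hL : L < 0 := lt_of_le_of_ne hLle hne
      set G : ℝ := κ + lam * y 0 ^ p with hGdef
      have hG : G < 0 := gneg (y 0) hy0
      set m : ℝ := L * G with hmdef
      have hm : 0 < m := mul_pos_of_neg_of_neg hL hG
      have hderivlb : ∀ t : ℝ, 0 ≤ t → m ≤ a₂ t * y t := by
        intro t ht
        have hyt0 := yneg t ht
        have hytL := hyleL t ht
        have hy0t : y 0 ≤ y t := hmono (le_refl 0 : (0:ℝ) ≤ 0) ht ht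
        have hpow : y 0 ^ p ≤ y t ^ p := hpo.strictMono_pow.monotone hy0t
        have hg : a₂ t ≤ G := by
          have hmax : max t 0 = t := max_eq_left ht
          simp only [ha₂def, hGdef, hmax]
          nlinarith
        nlinarith [hg, hytL, hL, hG]
      -- y t ≥ y 0 + m * t
      have hlin : ∀ t : ℝ, 0 ≤ t → y 0 + m * t ≤ y t := by
        intro t ht
        have hmono2 : MonotoneOn (fun t => y t - m * t) (Ici 0) := by
          apply monotoneOn_of_hasDerivWithinAt_nonneg (convex_Ici 0)
            (f' := fun t => a₂ t * y t - m)
          · exact fun x hx => ((hycont x hx).sub (continuous_const.mul continuous_id).continuousWithinAt)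
          · intro x hx
            rw [interior_Ici] at hx ⊢
            have h6 : HasDerivAt (fun t => y t - m * t) (a₂ x * y x - m) x := by
              have h7 : HasDerivAt (fun t => y t - m * t) (a₂ x * y x - m * 1) x :=
                (hz₂ x hx.le).sub ((hasDerivAt_id x).const_mul m)
              simpa using h7
            exact h6.hasDerivWithinAt
          · intro x hx
            rw [interior_Ici] at hx
            linarith [hderivlb x hx.le]
        have := hmono2 (self_mem_Ici) ht ht
        simp only [mul_zero, sub_zero] at this
        linarith
      set t₀ : ℝ := (-y 0) / m + 1 with ht₀def
      have ht₀ : 0 ≤ t₀ := by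
        have h5 : 0 < (-y 0) / m := div_pos (by linarith) hm
        rw [ht₀def]
        linarith
      have h1 := hlin t₀ ht₀
      have h2 := yneg t₀ ht₀
      have hmd : m * t₀ = -y 0 + m := by
        have h7 : m * ((-y 0) / m) = -y 0 := by
          field_simp
        rw [ht₀def, mul_add, mul_one, h7]
      nlinarith
    rw [hL0] at hylim
    exact hylim
  · -- y 0 = 0 : y ≡ 0 on [0,∞)
    have : ∀ t : ℝ, 0 ≤ t → y t = 0 := by
      intro t ht
      rw [rep t ht, h0, zero_mul]
    refine Tendsto.congr' ?_ tendsto_const_nhds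
    filter_upwards [eventually_ge_atTop (0:ℝ)] with t ht
    exact (this t ht).symm
  · -- y 0 > 0 : exponential decay from above
    have ypos : ∀ t : ℝ, 0 ≤ t → 0 < y t := by
      intro t ht
      rw [rep t ht]
      exact mul_pos h0 (Real.exp_pos _)
    have hanti : AntitoneOn (fun t => y t * Real.exp (-κ * t)) (Ici 0) := by
      apply antitoneOn_of_hasDerivWithinAt_nonpos (convex_Ici 0)
        (f' := fun t => lam * y t ^ (p + 1) * Real.exp (-κ * t))
      · exact fun x hx => ((hycont x hx).mul
          (Real.continuous_exp.comp (continuous_const.mul continuous_id)).continuousWithinAt)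
      · intro x hx
        rw [interior_Ici] at hx ⊢
        have h1 : HasDerivAt (fun t : ℝ => Real.exp (-κ * t)) (Real.exp (-κ * x) * (-κ)) x := by
          simpa using (((hasDerivAt_id x).const_mul (-κ)).exp)
        have h2 : HasDerivAt (fun t => y t * Real.exp (-κ * t)) _ x := (hy x hx.le).mul h1
        have h3 : HasDerivAt (fun t => y t * Real.exp (-κ * t))
            (lam * y x ^ (p + 1) * Real.exp (-κ * x)) x := by
          convert h2 using 1
          rw [pow_succ]
          ring
        exact h3.hasDerivWithinAt
      · intro x hx
        rw [interior_Ici] at hx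
        have := ypos x hx.le
        have hpp : 0 < y x ^ (p + 1) := pow_pos this _
        have h4 := mul_pos hpp (Real.exp_pos (-κ * x))
        nlinarith
    have hub : ∀ t : ℝ, 0 ≤ t → y t ≤ y 0 * Real.exp (κ * t) := by
      intro t ht
      have h := hanti self_mem_Ici ht ht
      simp only [mul_zero, Real.exp_zero, mul_one] at h
      have hexp : Real.exp (-κ * t) * Real.exp (κ * t) = 1 := by
        rw [← Real.exp_add]; simp
      calc y t = y t * Real.exp (-κ * t) * Real.exp (κ * t) := by
            rw [mul_assoc, hexp, mul_one]
        _ ≤ y 0 * Real.exp (κ * t) := by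
            exact mul_le_mul_of_nonneg_right h (Real.exp_pos _).le
    have hexptend : Tendsto (fun t : ℝ => y 0 * Real.exp (κ * t)) atTop (nhds 0) := by
      have h1 : Tendsto (fun t : ℝ => κ * t) atTop atBot :=
        tendsto_id.const_mul_atTop_of_neg hκ
      have h2 : Tendsto (fun t : ℝ => Real.exp (κ * t)) atTop (nhds 0) :=
        Real.tendsto_exp_atBot.comp h1
      simpa using h2.const_mul (y 0)
    refine tendsto_of_tendsto_of_tendsto_of_le_of_le' tendsto_const_nhds hexptend ?_ ?_
    · filter_upwards [eventually_ge_atTop (0:ℝ)] with t ht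
      exact (ypos t ht).le
    · filter_upwards [eventually_ge_atTop (0:ℝ)] with t ht
      exact hub t ht
end

section
/- Let k ≥ 4 be an even integer and set p := k − 2 (even). Let {v_1,…,v_n} be an orthonormal basis of ℝ^n and suppose κ_r < 0 and λ_r ≤ 0 for every r = 1,…,n. Then convergence is global: every differentiable solution x : [0,∞) → ℝ^n of ẋ(t) = Σ_{r=1}^n (κ_r·⟨v_r, x(t)⟩ + λ_r·⟨v_r, x(t)⟩^{k-1})·v_r satisfies x(t) → 0 as t → ∞, for every initial condition x(0) ∈ ℝ^n. -/
/-!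
The system decouples in the coordinates `cᵣ = ⟪vᵣ, x⟫`, each of which solves
`ċ = κ c + λ c^(k-1)`. Since `k` is even, `c · λ c^(k-1) = λ c^k ≤ 0`, so the nonlinear term
only dissipates: `c(t)² e^{-2κt}` is nonincreasing, which gives `|c(t)| ≤ |c(0)| e^{κt} → 0`.
-/

open Filter Real Topology
open scoped InnerProductSpace

section ScalarDecay

variable {a : ℝ} {c f : ℝ → ℝ}

lemma antitoneOn_sq_mul_exp_of_hasDerivAt (hc : ∀ t, 0 ≤ t → HasDerivAt c (a * c t + f t) t)
    (hcf : ∀ t, 0 ≤ t → c t * f t ≤ 0) :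
    AntitoneOn (fun t => c t ^ 2 * exp (-(2 * a) * t)) (Set.Ici 0) := by
  have hderiv : ∀ t, 0 ≤ t → HasDerivAt (fun t => c t ^ 2 * exp (-(2 * a) * t))
      (2 * (c t * f t) * exp (-(2 * a) * t)) t := by
    intro t ht
    have hsq : HasDerivAt (fun t => c t ^ 2) (2 * c t * (a * c t + f t)) t := by
      simpa using! (hc t ht).fun_pow 2
    have hexp : HasDerivAt (fun t => exp (-(2 * a) * t)) (exp (-(2 * a) * t) * -(2 * a)) t := by
      simpa using ((hasDerivAt_id t).const_mul (-(2 * a))).exp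
    exact (hsq.mul hexp).congr_deriv (by ring)
  refine antitoneOn_of_hasDerivWithinAt_nonpos (convex_Ici 0)
    (fun t ht => (hderiv t ht).continuousAt.continuousWithinAt)
    (fun t ht => (hderiv t (interior_subset ht)).hasDerivWithinAt) fun t ht =>
    mul_nonpos_of_nonpos_of_nonneg (by linarith [hcf t (interior_subset ht)]) (exp_pos _).le

lemma abs_le_abs_mul_exp_of_hasDerivAt_s10 (hc : ∀ t, 0 ≤ t → HasDerivAt c (a * c t + f t) t)
    (hcf : ∀ t, 0 ≤ t → c t * f t ≤ 0) {t : ℝ} (ht : 0 ≤ t) :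
    |c t| ≤ |c 0| * exp (a * t) := by
  have hmono := antitoneOn_sq_mul_exp_of_hasDerivAt hc hcf Set.self_mem_Ici ht ht
  simp only [mul_zero, exp_zero, mul_one] at hmono
  have hsq : c t ^ 2 ≤ (|c 0| * exp (a * t)) ^ 2 := by
    calc c t ^ 2 = c t ^ 2 * exp (-(2 * a) * t) * exp (a * t) ^ 2 := by
          rw [mul_assoc, ← exp_nat_mul, ← exp_add]; push_cast; ring_nf; simp
      _ ≤ c 0 ^ 2 * exp (a * t) ^ 2 := by gcongr
      _ = (|c 0| * exp (a * t)) ^ 2 := by rw [mul_pow, sq_abs]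
  simpa [abs_of_nonneg (by positivity : 0 ≤ |c 0| * exp (a * t))] using sq_le_sq.mp hsq

lemma tendsto_zero_of_hasDerivAt_of_mul_nonpos (ha : a < 0)
    (hc : ∀ t, 0 ≤ t → HasDerivAt c (a * c t + f t) t) (hcf : ∀ t, 0 ≤ t → c t * f t ≤ 0) :
    Tendsto c atTop (𝓝 0) := by
  refine squeeze_zero_norm' ?_ (a := fun t => |c 0| * exp (a * t)) ?_
  · filter_upwards [eventually_ge_atTop 0] with t ht
    exact abs_le_abs_mul_exp_of_hasDerivAt_s10 hc hcf ht
  · simpa using (tendsto_exp_atBot.comp (tendsto_id.const_mul_atTop_of_neg ha)).const_mul |c 0|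

end ScalarDecay

section Coordinates

variable {ι E : Type*} [Fintype ι] [NormedAddCommGroup E]

lemma Orthonormal.hasDerivAt_inner_of_hasDerivAt_sum [InnerProductSpace ℝ E] {v : ι → E}
    (hv : Orthonormal ℝ v) {x : ℝ → E} {F : ι → ℝ} {t : ℝ}
    (hx : HasDerivAt x (∑ r, F r • v r) t) (r : ι) :
    HasDerivAt (fun t => ⟪v r, x t⟫_ℝ) (F r) t := by
  simpa [hv.inner_right_fintype] using (hasDerivAt_const t (v r)).inner ℝ hx

lemma OrthonormalBasis.tendsto_zero_of_forall_inner {𝕜 : Type*} [RCLike 𝕜]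
    [InnerProductSpace 𝕜 E] (v : OrthonormalBasis ι 𝕜 E) {α : Type*} {l : Filter α}
    {x : α → E} (h : ∀ r, Tendsto (fun s => ⟪v r, x s⟫_𝕜) l (𝓝 0)) :
    Tendsto x l (𝓝 0) := by
  have hsum := tendsto_finsetSum Finset.univ fun r _ => (h r).smul_const (v r)
  simpa only [v.sum_repr', zero_smul, Finset.sum_const_zero] using hsum

end Coordinates

/-- Global convergence for even degree when κ_r < 0 and λ_r ≤ 0 for all r. -/
theorem stmt_10 (k n : ℕ) (hk : 4 ≤ k) (hke : Even k)
    (v : OrthonormalBasis (Fin n) ℝ (EuclideanSpace ℝ (Fin n)))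
    (κ lam : Fin n → ℝ) (hκ : ∀ r, κ r < 0) (hlam : ∀ r, lam r ≤ 0)
    (x : ℝ → EuclideanSpace ℝ (Fin n))
    (hx : ∀ t : ℝ, 0 ≤ t →
      HasDerivAt x
        (∑ r, (κ r * (inner ℝ (v r) (x t) : ℝ)
          + lam r * (inner ℝ (v r) (x t) : ℝ) ^ (k - 1)) • v r) t) :
    Filter.Tendsto x Filter.atTop (nhds 0) := by
  refine v.tendsto_zero_of_forall_inner fun r => ?_
  refine tendsto_zero_of_hasDerivAt_of_mul_nonpos (hκ r)
    (fun t ht => v.orthonormal.hasDerivAt_inner_of_hasDerivAt_sum (hx t ht) r) fun t _ => ?_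
  have hk1 : k - 1 + 1 = k := by omega
  calc ⟪v r, x t⟫_ℝ * (lam r * ⟪v r, x t⟫_ℝ ^ (k - 1)) = lam r * ⟪v r, x t⟫_ℝ ^ k := by
        rw [mul_left_comm, ← pow_succ', hk1]
    _ ≤ 0 := mul_nonpos_of_nonpos_of_nonneg (hlam r) (hke.pow_nonneg _)
end

section
/- Let p ≥ 2 be an even integer, κ < 0, α := −κ > 0, λ ∈ ℝ with λ ≠ 0, and ε > 0. Suppose y : [0,∞) → ℝ is differentiable and satisfies the scalar modal ODE ẏ(t) = κ·y(t) + λ·y(t)^{p+1} for all t ≥ 0, with ε < |y(0)|, and additionally |y(0)| < (α/λ)^{1/p} in the case λ > 0. Assume also ε^{−p} − λ/α > 0. Then the hitting time T := (1/(p·α))·ln( (ε^{−p} − λ/α) / (|y(0)|^{−p} − λ/α) ) satisfies T > 0, |y(T)| = ε, and |y(t)| > ε for all t ∈ [0, T). -/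
/-!
Substituting `u = y⁻ᵖ` turns the Bernoulli equation `ẏ = -α y + λ y^(p+1)` into the linear
equation `u̇ = pα u - pλ`, solved by `h t = λ/α + c e^(pαt)` with `c = |y 0|⁻ᵖ - λ/α`. To avoid
dividing by `y` before knowing that it never vanishes, we show instead that `w = yᵖ h - 1`
satisfies `ẇ = pλ yᵖ w` with `w 0 = 0`, so `w ≡ 0` by Grönwall. The region-of-attraction
hypothesis gives `c > 0`, so `|y t|⁻ᵖ = h t` increases strictly and reaches `ε⁻ᵖ` exactly at
`T = (pα)⁻¹ log ((ε⁻ᵖ - λ/α) / c)`.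
-/

open Real Set

theorem eq_zero_of_hasDerivAt_eq_smul_self {E : Type*} [NormedAddCommGroup E] [NormedSpace ℝ E]
    {w : ℝ → E} {a : ℝ → ℝ} {t₀ t₁ : ℝ} (ha : ContinuousOn a (Icc t₀ t₁))
    (hw : ∀ t ∈ Icc t₀ t₁, HasDerivAt w (a t • w t) t) (h₀ : w t₀ = 0) :
    ∀ t ∈ Icc t₀ t₁, w t = 0 := by
  obtain ⟨K, hK⟩ := isCompact_Icc.exists_bound_of_continuousOn ha
  refine eq_zero_of_abs_deriv_le_mul_abs_self_of_eq_zero_right (K := K)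
    (fun t ht ↦ (hw t ht).continuousAt.continuousWithinAt)
    (fun t ht ↦ (hw t (Ico_subset_Icc_self ht)).hasDerivWithinAt) h₀ fun t ht ↦ ?_
  rw [norm_smul]
  exact mul_le_mul_of_nonneg_right (hK t (Ico_subset_Icc_self ht)) (norm_nonneg _)

theorem hasDerivAt_div_add_mul_exp (p : ℕ) {α : ℝ} (hα : α ≠ 0) (lam c t : ℝ) :
    HasDerivAt (fun s ↦ lam / α + c * exp (p * α * s))
      (p * α * (lam / α + c * exp (p * α * t)) - p * lam) t := by
  refine ((((hasDerivAt_id t).const_mul (p * α)).exp.const_mul c).const_add _).congr_deriv ?_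
  simp only [id]
  field_simp
  ring

section Bernoulli

variable {y h : ℝ → ℝ} {p : ℕ} {α lam : ℝ}

theorem hasDerivAt_pow_mul_sub_one_of_bernoulli {t : ℝ}
    (hy : HasDerivAt y (-α * y t + lam * y t ^ (p + 1)) t)
    (hh : HasDerivAt h (p * α * h t - p * lam) t) :
    HasDerivAt (fun s ↦ y s ^ p * h s - 1) (p * lam * y t ^ p * (y t ^ p * h t - 1)) t := by
  refine (((hy.fun_pow p).mul hh).sub_const 1).congr_deriv ?_
  rcases p with _ | n
  · simp
  · simp only [Nat.add_sub_cancel]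
    push_cast
    ring

theorem pow_mul_eq_one_of_bernoulli
    (hy : ∀ t, 0 ≤ t → HasDerivAt y (-α * y t + lam * y t ^ (p + 1)) t)
    (hh : ∀ t, 0 ≤ t → HasDerivAt h (p * α * h t - p * lam) t) (h₀ : y 0 ^ p * h 0 = 1)
    {t : ℝ} (ht : 0 ≤ t) : y t ^ p * h t = 1 := by
  have hcont : ContinuousOn (fun s ↦ p * lam * y s ^ p) (Icc 0 t) := fun s hs ↦
    (((hy s hs.1).continuousAt.pow p).const_mul _).continuousWithinAt
  refine sub_eq_zero.1 <| eq_zero_of_hasDerivAt_eq_smul_self hcont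
    (fun s hs ↦ hasDerivAt_pow_mul_sub_one_of_bernoulli (hy s hs.1) (hh s hs.1))
    (sub_eq_zero.2 h₀) t ⟨ht, le_rfl⟩

end Bernoulli

theorem div_lt_inv_pow_of_lt_rpow {x α lam : ℝ} {p : ℕ} (hx : 0 < x) (hα : 0 < α) (hp : p ≠ 0)
    (hroa : 0 < lam → x < (α / lam) ^ ((1 : ℝ) / p)) : lam / α < (x ^ p)⁻¹ := by
  rcases le_or_gt lam 0 with hlam | hlam
  · exact (div_nonpos_of_nonpos_of_nonneg hlam hα.le).trans_lt (by positivity)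
  · have hxp : x ^ p < α / lam := by
      have := hroa hlam
      rwa [one_div, lt_rpow_inv_iff_of_pos hx.le (div_pos hα hlam).le (by positivity),
        rpow_natCast] at this
    rwa [lt_inv_comm₀ (div_pos hlam hα) (by positivity), inv_div]

section PowMulEqOne

variable {x v ε : ℝ} {p : ℕ}

theorem eq_of_pow_mul_inv_pow_eq_one (hx : 0 ≤ x) (hε : 0 < ε) (hp : p ≠ 0)
    (h : x ^ p * (ε ^ p)⁻¹ = 1) : x = ε := by
  rw [mul_inv_eq_one₀ (by positivity)] at h
  exact (pow_left_inj₀ hx hε.le hp).1 h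

theorem lt_of_pow_mul_eq_one (hx : 0 ≤ x) (hε : 0 < ε) (hp : p ≠ 0) (h : x ^ p * v = 1)
    (hv : v < (ε ^ p)⁻¹) : ε < x := by
  have hv₀ : 0 < v := pos_of_mul_pos_right (h ▸ one_pos) (by positivity)
  rw [← pow_lt_pow_iff_left₀ hε.le hx hp, eq_inv_of_mul_eq_one_left h,
    lt_inv_comm₀ (by positivity) hv₀]
  exact hv

end PowMulEqOne

theorem stmt_12_general (p : ℕ) (hp : 2 ≤ p) (hpe : Even p)
    (κ : ℝ) (hκ : κ < 0) (α : ℝ) (hα : α = -κ)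
    (lam : ℝ) (ε : ℝ) (hε : 0 < ε)
    (y : ℝ → ℝ)
    (hy : ∀ t : ℝ, 0 ≤ t → HasDerivAt y (κ * y t + lam * y t ^ (p + 1)) t)
    (hy0 : ε < |y 0|)
    (hroa : 0 < lam → |y 0| < (α / lam) ^ ((1 : ℝ) / (p : ℝ)))
    (T : ℝ)
    (hT : T = (1 / ((p : ℝ) * α)) *
      Real.log ((ε ^ (-(p : ℤ)) - lam / α) / (|y 0| ^ (-(p : ℤ)) - lam / α))) :
    0 < T ∧ |y T| = ε ∧ ∀ t ∈ Set.Ico (0 : ℝ) T, ε < |y t| := by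
  obtain rfl : κ = -α := by linarith
  have hα₀ : 0 < α := by linarith
  have hp₀ : p ≠ 0 := by omega
  set c := (|y 0| ^ p)⁻¹ - lam / α
  set h : ℝ → ℝ := fun t ↦ lam / α + c * exp (p * α * t)
  have hc : 0 < c := sub_pos.2 (div_lt_inv_pow_of_lt_rpow (hε.trans hy0) hα₀ hp₀ hroa)
  have hinv : ∀ t, 0 ≤ t → |y t| ^ p * h t = 1 := by
    have h₀ : y 0 ^ p * h 0 = 1 := by
      simp only [h, c, mul_zero, exp_zero, mul_one, add_sub_cancel]
      rw [← hpe.pow_abs]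
      exact mul_inv_cancel₀ (pow_pos (hε.trans hy0) p).ne'
    simpa only [hpe.pow_abs] using fun t ↦ pow_mul_eq_one_of_bernoulli hy
      (fun s _ ↦ hasDerivAt_div_add_mul_exp p hα₀.ne' lam c s) h₀
  have hεc : c < (ε ^ p)⁻¹ - lam / α :=
    sub_lt_sub_right (inv_strictAnti₀ (by positivity) (pow_lt_pow_left₀ hy0 hε.le hp₀)) _
  have hmono : StrictMono h := fun s t hst ↦ by
    simp only [h]
    gcongr
  simp only [zpow_neg, zpow_natCast] at hT
  have hTpos : 0 < T := by
    rw [hT]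
    have := log_pos ((one_lt_div hc).2 hεc)
    positivity
  have hhT : h T = (ε ^ p)⁻¹ := by
    have hR : 0 < ((ε ^ p)⁻¹ - lam / α) / c := div_pos (hc.trans hεc) hc
    simp only [h, hT]
    rw [← mul_assoc, mul_one_div_cancel (by positivity), one_mul, exp_log hR,
      mul_div_cancel₀ _ hc.ne']
    ring
  refine ⟨hTpos, eq_of_pow_mul_inv_pow_eq_one (abs_nonneg _) hε hp₀ (hhT ▸ hinv T hTpos.le),
    fun t ⟨ht₀, htT⟩ ↦ lt_of_pow_mul_eq_one (abs_nonneg _) hε hp₀ (hinv t ht₀) (hhT ▸ hmono htT)⟩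

/-- Hitting time for an even-p mode (λ ≠ 0). -/
theorem stmt_12 (p : ℕ) (hp : 2 ≤ p) (hpe : Even p)
    (κ : ℝ) (hκ : κ < 0) (α : ℝ) (hα : α = -κ)
    (lam : ℝ) (hlam : lam ≠ 0) (ε : ℝ) (hε : 0 < ε)
    (y : ℝ → ℝ)
    (hy : ∀ t : ℝ, 0 ≤ t → HasDerivAt y (κ * y t + lam * y t ^ (p + 1)) t)
    (hy0 : ε < |y 0|)
    (hroa : 0 < lam → |y 0| < (α / lam) ^ ((1 : ℝ) / (p : ℝ)))
    (harg : 0 < ε ^ (-(p : ℤ)) - lam / α)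
    (T : ℝ)
    (hT : T = (1 / ((p : ℝ) * α)) *
      Real.log ((ε ^ (-(p : ℤ)) - lam / α) / (|y 0| ^ (-(p : ℤ)) - lam / α))) :
    0 < T ∧ |y T| = ε ∧ ∀ t ∈ Set.Ico (0 : ℝ) T, ε < |y t| :=
  stmt_12_general p hp hpe κ hκ α hα lam ε hε y hy hy0 hroa T hT
end

section
/- Let p ≥ 1 be an odd integer, κ < 0, α := −κ > 0, λ ∈ ℝ with λ ≠ 0, and ε > 0. Let y : [0,∞) → ℝ be differentiable satisfying the scalar modal ODE ẏ(t) = κ·y(t) + λ·y(t)^{p+1} for all t ≥ 0, with ε < |y(0)|. Set s := sign(y(0)) and b := s·λ, and assume |y(0)| < (α/b)^{1/p} in the case b > 0, and ε^{−p} − b/α > 0. Then the hitting time T := (1/(p·α))·ln( (ε^{−p} − b/α) / (|y(0)|^{−p} − b/α) ) satisfies T > 0, |y(T)| = ε, and |y(t)| > ε for all t ∈ [0, T). -/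
/-!
The Bernoulli substitution linearises the equation. With `s = sign y(0)`, `b = s λ` and
`u(t) = b/α + c e^{pαt}`, `c = |y(0)|^{-p} - b/α`, the quantity `y^p u - s` satisfies the linear
homogeneous equation `H' = pλ y^p H` and vanishes at `0`, so `y(t)^p u(t) = s`, i.e.
`|y(t)|^p = 1/u(t)`, for all `t ≥ 0`. The basin condition makes `c > 0`, so `u` is increasing, and
`T` is exactly the time at which `u` reaches `ε^{-p}`.
-/

open Set Real

theorem eqOn_zero_of_hasDerivWithinAt_mul {a f : ℝ → ℝ} {t₀ t₁ : ℝ}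
    (ha : ContinuousOn a (Icc t₀ t₁)) (hf : ContinuousOn f (Icc t₀ t₁))
    (hf' : ∀ t ∈ Ico t₀ t₁, HasDerivWithinAt f (a t * f t) (Ici t) t) (h₀ : f t₀ = 0) :
    EqOn f 0 (Icc t₀ t₁) := by
  obtain ⟨K, hK⟩ := isCompact_Icc.exists_bound_of_continuousOn ha
  have hlip : ∀ t ∈ Ico t₀ t₁, LipschitzOnWith K.toNNReal (a t * ·) univ := fun t ht =>
    ((lipschitzWith_smul (a t)).weaken (by
      rw [← NNReal.coe_le_coe, coe_nnnorm]; exact (hK t (Ico_subset_Icc_self ht)).trans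
        (le_max_left _ _))).lipschitzOnWith
  exact ODE_solution_unique_of_mem_Icc_right hlip hf hf' (fun _ _ => mem_univ _)
    continuousOn_const
    (fun t _ => (hasDerivWithinAt_const t (Ici t) (0 : ℝ)).congr_deriv (mul_zero (a t)).symm)
    (fun _ _ => mem_univ _) h₀

theorem hasDerivAt_pow_mul_sub_of_bernoulli {y u : ℝ → ℝ} {p : ℕ} {κ lam σ t : ℝ}
    (hy : HasDerivAt y (κ * y t + lam * y t ^ (p + 1)) t)
    (hu : HasDerivAt u (-(p * (κ * u t + lam * σ))) t) :
    HasDerivAt (fun t => y t ^ p * u t - σ) (p * lam * y t ^ p * (y t ^ p * u t - σ)) t := by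
  refine (((hy.fun_pow p).fun_mul hu).sub_const σ).congr_deriv ?_
  rcases p with _ | p
  · simp
  · push_cast; ring

theorem pow_mul_eq_of_bernoulli {y u : ℝ → ℝ} {p : ℕ} {κ lam σ : ℝ}
    (hy : ∀ t, 0 ≤ t → HasDerivAt y (κ * y t + lam * y t ^ (p + 1)) t)
    (hu : ∀ t, 0 ≤ t → HasDerivAt u (-(p * (κ * u t + lam * σ))) t)
    (h₀ : y 0 ^ p * u 0 = σ) {t : ℝ} (ht : 0 ≤ t) : y t ^ p * u t = σ := by
  have hE := fun τ (hτ : τ ∈ Icc 0 t) =>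
    hasDerivAt_pow_mul_sub_of_bernoulli (hy τ hτ.1) (hu τ hτ.1)
  have hy_cont : ContinuousOn y (Icc 0 t) := fun τ hτ =>
    (hy τ hτ.1).continuousAt.continuousWithinAt
  refine sub_eq_zero.1 (eqOn_zero_of_hasDerivWithinAt_mul (a := fun τ => p * lam * y τ ^ p)
    (by fun_prop) (fun τ hτ => (hE τ hτ).continuousAt.continuousWithinAt)
    (fun τ hτ => (hE τ (Ico_subset_Icc_self hτ)).hasDerivWithinAt) (sub_eq_zero.2 h₀)
    ⟨ht, le_rfl⟩)

theorem div_lt_zpow_neg_of_lt_rpow {x α b : ℝ} {p : ℕ} (hp : p ≠ 0) (hx : 0 < x)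
    (hα : 0 < α) (h : 0 < b → x < (α / b) ^ ((1 : ℝ) / p)) : b / α < x ^ (-(p : ℤ)) := by
  rcases le_or_gt b 0 with hb | hb
  · exact (div_nonpos_of_nonpos_of_nonneg hb hα.le).trans_lt (zpow_pos hx _)
  · have hxp : x ^ p < α / b := by
      have := h hb
      rwa [one_div, lt_rpow_inv_iff_of_pos hx.le (by positivity) (by positivity),
        rpow_natCast] at this
    rw [zpow_neg, zpow_natCast, ← inv_div α b]
    exact inv_strictAnti₀ (by positivity) hxp

theorem pow_mul_abs_zpow_neg_eq_sign {x : ℝ} {p : ℕ} (hp : Odd p) (hx : x ≠ 0) :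
    x ^ p * |x| ^ (-(p : ℤ)) = Real.sign x := by
  rw [zpow_neg, zpow_natCast]
  rcases hx.lt_or_gt with h | h
  · rw [Real.sign_of_neg h, abs_of_neg h, hp.neg_pow, inv_neg, mul_neg,
      mul_inv_cancel₀ (pow_ne_zero p hx)]
  · rw [Real.sign_of_pos h, abs_of_pos h, mul_inv_cancel₀ (pow_ne_zero p hx)]

theorem hitting_time_of_abs_pow_mul_eq_one {y u : ℝ → ℝ} {p : ℕ} (hp : p ≠ 0) {ε T : ℝ}
    (hε : 0 < ε) (hu : StrictMono u) (hyu : ∀ t, 0 ≤ t → |y t| ^ p * u t = 1)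
    (huT : ε ^ p * u T = 1) (hy0 : ε < |y 0|) :
    0 < T ∧ |y T| = ε ∧ ∀ t ∈ Ico 0 T, ε < |y t| := by
  have huT_pos : 0 < u T := pos_of_mul_pos_right (huT ▸ one_pos) (by positivity)
  have lt_iff : ∀ t, 0 ≤ t → (ε < |y t| ↔ t < T) := fun t ht => by
    have hut_pos : 0 < u t := pos_of_mul_pos_right (hyu t ht ▸ one_pos) (by positivity)
    rw [← pow_lt_pow_iff_left₀ hε.le (abs_nonneg _) hp, eq_inv_of_mul_eq_one_left huT,
      eq_inv_of_mul_eq_one_left (hyu t ht), inv_lt_inv₀ huT_pos hut_pos, hu.lt_iff_lt]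
  have hT : 0 < T := (lt_iff 0 le_rfl).1 hy0
  refine ⟨hT, ?_, fun t ht => (lt_iff t ht.1).2 ht.2⟩
  refine (pow_left_inj₀ (abs_nonneg _) hε.le hp).1 ?_
  exact mul_right_cancel₀ huT_pos.ne' ((hyu T hT.le).trans huT.symm)

theorem stmt_13_general (p : ℕ) (hpo : Odd p)
    (κ : ℝ) (hκ : κ < 0) (α : ℝ) (hα : α = -κ)
    (lam : ℝ) (ε : ℝ) (hε : 0 < ε)
    (y : ℝ → ℝ)
    (hy : ∀ t : ℝ, 0 ≤ t → HasDerivAt y (κ * y t + lam * y t ^ (p + 1)) t)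
    (hy0 : ε < |y 0|)
    (b : ℝ) (hb : b = Real.sign (y 0) * lam)
    (hroa : 0 < b → |y 0| < (α / b) ^ ((1 : ℝ) / (p : ℝ)))
    (harg : 0 < ε ^ (-(p : ℤ)) - b / α)
    (T : ℝ)
    (hT : T = (1 / ((p : ℝ) * α)) *
      Real.log ((ε ^ (-(p : ℤ)) - b / α) / (|y 0| ^ (-(p : ℤ)) - b / α))) :
    0 < T ∧ |y T| = ε ∧ ∀ t ∈ Set.Ico (0 : ℝ) T, ε < |y t| := by
  have hα0 : 0 < α := by linarith
  have hp : p ≠ 0 := hpo.pos.ne'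
  have hy0_pos : 0 < |y 0| := hε.trans hy0
  set c := |y 0| ^ (-(p : ℤ)) - b / α
  have hc : 0 < c := sub_pos.2 (div_lt_zpow_neg_of_lt_rpow hp hy0_pos hα0 hroa)
  set u : ℝ → ℝ := fun t => b / α + c * exp (p * α * t)
  have hu : StrictMono u := fun t₁ t₂ h => by dsimp only [u]; gcongr
  have hu' : ∀ t, HasDerivAt u (-(p * (κ * u t + lam * Real.sign (y 0)))) t := fun t =>
    ((((hasDerivAt_id t).const_mul (p * α)).exp.const_mul c).const_add (b / α)).congr_deriv
      (by rw [show κ = -α by linarith]; dsimp only [u, id]; subst hb; field_simp; ring)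
  have hu0 : u 0 = |y 0| ^ (-(p : ℤ)) := by simp [u, c]
  have hexpT : exp (p * α * T) = (ε ^ (-(p : ℤ)) - b / α) / c := by
    rw [hT, ← mul_assoc, mul_one_div_cancel (by positivity), one_mul, exp_log (div_pos harg hc)]
  have huT : u T = ε ^ (-(p : ℤ)) := by
    simp only [u, hexpT]; field_simp; ring
  have hεuT : ε ^ p * u T = 1 := by
    rw [huT, zpow_neg, zpow_natCast, mul_inv_cancel₀ (by positivity)]
  have hyu : ∀ t, 0 ≤ t → |y t| ^ p * u t = 1 := fun t ht => by
    have hsign := pow_mul_eq_of_bernoulli hy (fun t _ => hu' t)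
      (by rw [hu0, pow_mul_abs_zpow_neg_eq_sign hpo (abs_pos.1 hy0_pos)]) ht
    have hut : 0 < u t := (hu0 ▸ zpow_pos hy0_pos _).trans_le (hu.monotone ht)
    rw [← abs_pow, ← abs_of_pos hut, ← abs_mul, hsign]
    rcases Real.sign_apply_eq_of_ne_zero _ (abs_pos.1 hy0_pos) with h | h <;> simp [h]
  exact hitting_time_of_abs_pow_mul_eq_one hp hε hu hyu hεuT hy0

/-- Hitting time for an odd-p mode (λ ≠ 0), with sign-dependent constant b. -/
theorem stmt_13 (p : ℕ) (hp : 1 ≤ p) (hpo : Odd p)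
    (κ : ℝ) (hκ : κ < 0) (α : ℝ) (hα : α = -κ)
    (lam : ℝ) (hlam : lam ≠ 0) (ε : ℝ) (hε : 0 < ε)
    (y : ℝ → ℝ)
    (hy : ∀ t : ℝ, 0 ≤ t → HasDerivAt y (κ * y t + lam * y t ^ (p + 1)) t)
    (hy0 : ε < |y 0|)
    (b : ℝ) (hb : b = Real.sign (y 0) * lam)
    (hroa : 0 < b → |y 0| < (α / b) ^ ((1 : ℝ) / (p : ℝ)))
    (harg : 0 < ε ^ (-(p : ℤ)) - b / α)
    (T : ℝ)
    (hT : T = (1 / ((p : ℝ) * α)) *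
      Real.log ((ε ^ (-(p : ℤ)) - b / α) / (|y 0| ^ (-(p : ℤ)) - b / α))) :
    0 < T ∧ |y T| = ε ∧ ∀ t ∈ Set.Ico (0 : ℝ) T, ε < |y t| :=
  stmt_13_general p hpo κ hκ α hα lam ε hε y hy hy0 b hb hroa harg T hT
end

section
/- Let p ≥ 2 be an even integer, κ < 0, α := −κ > 0, and λ > 0, and set c := (α/λ)^{1/p}. Let y₀ ∈ ℝ with |y₀| > c, and define the escape time T_esc := (1/(p·α))·ln( (λ/α) / (λ/α − y₀^{−p}) ), which is well-defined and positive since 0 < y₀^{−p} < λ/α. Then there is no differentiable function y : [0, T_esc] → ℝ satisfying ẏ(t) = κ·y(t) + λ·y(t)^{p+1} for all t ∈ [0, T_esc] with y(0) = y₀; i.e., every solution with initial value y₀ exists only on an interval [0, b) with b ≤ T_esc and escapes to infinity in finite time. -/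
/-!
Along a solution, `w := y ^ p` solves the Riccati equation `w' = pκ w + pλ w²`. Since `pλ w² ≥ 0`,
`w e^{-pκt}` is nondecreasing, so `w` stays positive; then the Bernoulli substitution `u := 1 / w`
linearises the equation to `(u + λ/κ)' = -pκ (u + λ/κ)`. Hence
`u(t) = λ/α + (u(0) - λ/α) e^{pαt}`, which vanishes exactly at the escape time, contradicting `u > 0`.
-/

open Real Set

theorem hasDerivAt_exp_mul_sub (k a t : ℝ) :
    HasDerivAt (fun s => exp (k * (s - a))) (exp (k * (t - a)) * k) t := by
  simpa using (((hasDerivAt_id t).sub_const a).const_mul k).exp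

section LinearComparison

variable {a b k : ℝ}

theorem eq_mul_exp_of_hasDerivWithinAt_eq_mul {f : ℝ → ℝ}
    (hf : ∀ t ∈ Icc a b, HasDerivWithinAt f (k * f t) (Icc a b) t) :
    ∀ t ∈ Icc a b, f t = f a * exp (k * (t - a)) := by
  have hg : ∀ t ∈ Icc a b,
      HasDerivWithinAt (fun s => f s * exp (-k * (s - a))) 0 (Icc a b) t := fun t ht =>
    ((hf t ht).mul (hasDerivAt_exp_mul_sub (-k) a t).hasDerivWithinAt).congr_deriv (by ring)
  have hconst := constant_of_has_deriv_right_zero (fun t ht => (hg t ht).continuousWithinAt)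
    fun t ht => (hg t (Ico_subset_Icc_self ht)).mono_of_mem_nhdsWithin (Icc_mem_nhdsGE_of_mem ht)
  intro t ht
  have hft := hconst t ht
  simp only [sub_self, mul_zero, exp_zero, mul_one] at hft
  rw [← hft, mul_assoc, ← exp_add]
  simp

theorem pos_of_hasDerivWithinAt_ge_mul {w w' : ℝ → ℝ}
    (hw : ∀ t ∈ Icc a b, HasDerivWithinAt w (w' t) (Icc a b) t)
    (hw' : ∀ t ∈ Icc a b, k * w t ≤ w' t) (ha : 0 < w a) :
    ∀ t ∈ Icc a b, 0 < w t := by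
  have hmono : MonotoneOn (fun t => w t * exp (-k * (t - a))) (Icc a b) := by
    refine monotoneOn_of_hasDerivWithinAt_nonneg (convex_Icc a b)
      (f' := fun t => (w' t - k * w t) * exp (-k * (t - a)))
      (fun t ht => (hw t ht).continuousWithinAt.mul
        (hasDerivAt_exp_mul_sub (-k) a t).continuousAt.continuousWithinAt)
      (fun t ht => ?_) (fun t ht => ?_)
    all_goals rw [interior_Icc] at ht
    · rw [interior_Icc]
      exact (((hw t (Ioo_subset_Icc_self ht)).mono Ioo_subset_Icc_self).mul
        (hasDerivAt_exp_mul_sub (-k) a t).hasDerivWithinAt).congr_deriv (by ring)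
    · exact mul_nonneg (sub_nonneg.2 (hw' t (Ioo_subset_Icc_self ht))) (exp_pos _).le
  intro t ht
  have hwt := hmono (left_mem_Icc.2 (ht.1.trans ht.2)) ht ht.1
  simp only [sub_self, mul_zero, exp_zero, mul_one] at hwt
  exact pos_of_mul_pos_left (ha.trans_le hwt) (exp_pos _).le

end LinearComparison

theorem hasDerivWithinAt_inv_add_div_of_riccati {w : ℝ → ℝ} {a b t : ℝ} {s : Set ℝ}
    (ha : a ≠ 0) (hw : HasDerivWithinAt w (a * w t + b * w t ^ 2) s t) (hwt : w t ≠ 0) :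
    HasDerivWithinAt (fun s => (w s)⁻¹ + b / a) (-a * ((w t)⁻¹ + b / a)) s t := by
  refine ((hw.inv hwt).add_const (b / a)).congr_deriv ?_
  field_simp

theorem riccati_inv_pos {w : ℝ → ℝ} {a b t₀ t₁ : ℝ} (ha : a ≠ 0) (hb : 0 ≤ b)
    (hw : ∀ t ∈ Icc t₀ t₁, HasDerivWithinAt w (a * w t + b * w t ^ 2) (Icc t₀ t₁) t)
    (h₀ : 0 < w t₀) :
    ∀ t ∈ Icc t₀ t₁, 0 < ((w t₀)⁻¹ + b / a) * exp (-a * (t - t₀)) - b / a := by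
  have hpos := pos_of_hasDerivWithinAt_ge_mul hw
    (fun t _ => le_add_of_nonneg_right (mul_nonneg hb (sq_nonneg _))) h₀
  have hlin := eq_mul_exp_of_hasDerivWithinAt_eq_mul fun t ht =>
    hasDerivWithinAt_inv_add_div_of_riccati ha (hw t ht) (hpos t ht).ne'
  intro t ht
  rw [← hlin t ht, add_sub_cancel_right]
  exact inv_pos.2 (hpos t ht)

theorem hasDerivWithinAt_pow_of_mode {y : ℝ → ℝ} {κ lam t : ℝ} {s : Set ℝ} (p : ℕ)
    (hy : HasDerivWithinAt y (κ * y t + lam * y t ^ (p + 1)) s t) :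
    HasDerivWithinAt (fun s => y s ^ p) (p * κ * y t ^ p + p * lam * (y t ^ p) ^ 2) s t := by
  refine (hy.pow p).congr_deriv ?_
  rcases p with _ | q
  · simp
  · push_cast; ring

theorem zpow_neg_pos_and_lt_inv {p : ℕ} (hp : p ≠ 0) (hpe : Even p) {r y : ℝ} (hr : 0 < r)
    (h : r ^ ((1 : ℝ) / p) < |y|) : 0 < y ^ (-(p : ℤ)) ∧ y ^ (-(p : ℤ)) < r⁻¹ := by
  have hpow : r < |y| ^ p := by
    rwa [one_div, rpow_inv_lt_iff_of_pos hr.le (abs_nonneg y) (by positivity), rpow_natCast] at h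
  rw [zpow_neg, zpow_natCast, ← hpe.pow_abs]
  exact ⟨inv_pos.2 (hr.trans hpow), inv_strictAnti₀ hr hpow⟩

noncomputable def escapeTime (k Λ q : ℝ) : ℝ := 1 / k * log (Λ / (Λ - q))

theorem escapeTime_pos {k Λ q : ℝ} (hk : 0 < k) (hq : 0 < q) (hqΛ : q < Λ) :
    0 < escapeTime k Λ q :=
  mul_pos (one_div_pos.2 hk) (log_pos ((one_lt_div (sub_pos.2 hqΛ)).2 (by linarith)))

theorem sub_mul_exp_escapeTime {k Λ q : ℝ} (hk : k ≠ 0) (hq : 0 ≤ q) (hqΛ : q < Λ) :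
    (q - Λ) * exp (k * escapeTime k Λ q) = -Λ := by
  have hgap : Λ - q ≠ 0 := (sub_pos.2 hqΛ).ne'
  rw [escapeTime, ← mul_assoc, mul_one_div_cancel hk, one_mul,
    exp_log (div_pos (hq.trans_lt hqΛ) (sub_pos.2 hqΛ))]
  field_simp
  ring

/-- Finite-time escape for an even-p mode with |y₀| > c. -/
theorem stmt_14 (p : ℕ) (hp : 2 ≤ p) (hpe : Even p)
    (κ : ℝ) (hκ : κ < 0) (α : ℝ) (hα : α = -κ)
    (lam : ℝ) (hlam : 0 < lam)
    (c : ℝ) (hc : c = (α / lam) ^ ((1 : ℝ) / (p : ℝ)))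
    (y₀ : ℝ) (hy₀ : c < |y₀|)
    (T : ℝ)
    (hT : T = (1 / ((p : ℝ) * α)) *
      Real.log ((lam / α) / (lam / α - y₀ ^ (-(p : ℤ))))) :
    0 < y₀ ^ (-(p : ℤ)) ∧ y₀ ^ (-(p : ℤ)) < lam / α ∧ 0 < T ∧
      ¬ ∃ y : ℝ → ℝ, y 0 = y₀ ∧
        ∀ t ∈ Set.Icc (0 : ℝ) T,
          HasDerivWithinAt y (κ * y t + lam * y t ^ (p + 1)) (Set.Icc (0 : ℝ) T) t := by
  obtain rfl : κ = -α := by linarith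
  have hα0 : 0 < α := by linarith
  have hp0 : p ≠ 0 := by omega
  have hk : 0 < (p : ℝ) * α := by positivity
  obtain ⟨hu₀, hu₀Λ⟩ := zpow_neg_pos_and_lt_inv hp0 hpe (div_pos hα0 hlam) (hc ▸ hy₀)
  rw [inv_div] at hu₀Λ
  change T = escapeTime _ _ _ at hT
  have hT0 : 0 < T := hT ▸ escapeTime_pos hk hu₀ hu₀Λ
  refine ⟨hu₀, hu₀Λ, hT0, ?_⟩
  rintro ⟨y, hy0, hy⟩
  have hy0p : 0 < y 0 ^ p := hy0 ▸ hpe.pow_pos (by rintro rfl; simp [hp0] at hu₀)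
  have hpos := riccati_inv_pos (mul_ne_zero (by positivity) (by linarith)) (by positivity)
    (fun t ht => hasDerivWithinAt_pow_of_mode p (hy t ht)) hy0p
    T ⟨hT0.le, le_rfl⟩
  have hratio : (p : ℝ) * lam / (p * -α) = -(lam / α) := by field_simp
  have harg : -(p * -α) * (T - 0) = p * α * T := by ring
  rw [hy0, ← zpow_natCast, ← zpow_neg, hratio, harg, ← sub_eq_add_neg, hT,
    sub_mul_exp_escapeTime hk.ne' hu₀.le hu₀Λ] at hpos
  linarith
end

section
/- Let p ≥ 1 be an odd integer, κ < 0, α := −κ > 0, and λ < 0, and let c < 0 be the unique real root of κ + λ·s^p = 0. Let y₀ < c, and define the escape time T_esc := (1/(p·α))·ln( (λ/α) / (λ/α − y₀^{−p}) ), which is well-defined and positive since λ/α < y₀^{−p} < 0. Then there is no differentiable function y : [0, T_esc] → ℝ satisfying ẏ(t) = κ·y(t) + λ·y(t)^{p+1} for all t ∈ [0, T_esc] with y(0) = y₀; i.e., the solution escapes to −∞ in finite time (finite-time blow-down), before T_esc. -/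
/-!
With `v = y ^ p` the mode equation becomes the logistic equation `v' = v (pκ + pλ v)`. The
Bernoulli substitution `1 / v` would solve it explicitly; with denominators cleared, the explicit
solution reads `exp (pκ t) (pκ + pλ v t) v 0 = (pκ + pλ v 0) v t`, and this holds on the whole
interval of existence, zeros of `v` included, because the difference of the two sides solves a
linear equation `G' = (pκ + pλ v) G` with `G 0 = 0`. The escape time is the `t` with
`exp (pκ t) λ v 0 = κ + λ v 0`, and there the formula collapses to `κ v 0 = 0`.
-/

open Set Real

theorem eq_zero_of_hasDerivWithinAt_smul_self {E : Type*} [NormedAddCommGroup E]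
    [NormedSpace ℝ E] {G : ℝ → E} {f : ℝ → ℝ} {a b : ℝ} (hf : ContinuousOn f (Icc a b))
    (hG : ∀ t ∈ Icc a b, HasDerivWithinAt G (f t • G t) (Icc a b) t) (ha : G a = 0) :
    ∀ t ∈ Icc a b, G t = 0 := by
  obtain ⟨K, hK⟩ := isCompact_Icc.exists_bound_of_continuousOn hf
  refine eq_zero_of_abs_deriv_le_mul_abs_self_of_eq_zero_right (f' := fun t => f t • G t) (K := K)
    (fun t ht => (hG t ht).continuousWithinAt) (fun t ht => ?_) ha (fun t ht => ?_)
  · exact (hG t (Ico_subset_Icc_self ht)).mono_of_mem_nhdsWithin (Icc_mem_nhdsGE_of_mem ht)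
  · rw [norm_smul]
    exact mul_le_mul_of_nonneg_right (hK t (Ico_subset_Icc_self ht)) (norm_nonneg _)

theorem HasDerivWithinAt.pow_of_bernoulli {y : ℝ → ℝ} {κ lam t : ℝ} {s : Set ℝ} (p : ℕ)
    (hy : HasDerivWithinAt y (κ * y t + lam * y t ^ (p + 1)) s t) :
    HasDerivWithinAt (fun u => y u ^ p) (y t ^ p * (p * κ + p * lam * y t ^ p)) s t := by
  refine (hy.fun_pow p).congr_deriv ?_
  rcases p with _ | p
  · simp
  · simp only [Nat.add_sub_cancel]
    push_cast
    ring

theorem logistic_closed_form {v : ℝ → ℝ} {r m b : ℝ}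
    (hv : ∀ t ∈ Icc 0 b, HasDerivWithinAt v (v t * (r + m * v t)) (Icc 0 b) t) :
    ∀ t ∈ Icc 0 b, exp (r * t) * (r + m * v t) * v 0 = (r + m * v 0) * v t := by
  have hG : ∀ t ∈ Icc 0 b, HasDerivWithinAt
      (fun t => exp (r * t) * (r + m * v t) * v 0 - (r + m * v 0) * v t)
      ((r + m * v t) • (exp (r * t) * (r + m * v t) * v 0 - (r + m * v 0) * v t))
      (Icc 0 b) t := by
    intro t ht
    have hexp : HasDerivWithinAt (fun t => exp (r * t)) (exp (r * t) * r) (Icc 0 b) t := by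
      simpa using ((hasDerivWithinAt_id t _).const_mul r).exp
    refine (((hexp.mul ((hv t ht).const_mul m |>.const_add r)).mul_const (v 0)).sub
      ((hv t ht).const_mul (r + m * v 0))).congr_deriv ?_
    rw [smul_eq_mul]
    ring
  have hcont : ContinuousOn (fun t => r + m * v t) (Icc 0 b) :=
    continuousOn_const.add (continuousOn_const.mul fun t ht => (hv t ht).continuousWithinAt)
  intro t ht
  have := eq_zero_of_hasDerivWithinAt_smul_self hcont hG (by simp) t ht
  linarith

theorem not_forall_hasDerivWithinAt_of_escape (p : ℕ) {y : ℝ → ℝ} {κ lam b : ℝ} (hκ : κ ≠ 0)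
    (hy₀ : y 0 ≠ 0) (hb : 0 ≤ b)
    (hesc : exp (p * κ * b) * (lam * y 0 ^ p) = κ + lam * y 0 ^ p) :
    ¬ ∀ t ∈ Icc 0 b, HasDerivWithinAt y (κ * y t + lam * y t ^ (p + 1)) (Icc 0 b) t := by
  intro hy
  rcases Nat.eq_zero_or_pos p with rfl | hp
  · simp only [CharP.cast_eq_zero, zero_mul, exp_zero, pow_zero, one_mul] at hesc
    exact hκ (by linarith)
  have hclosed := logistic_closed_form (fun t ht => (hy t ht).pow_of_bernoulli p) b ⟨hb, le_rfl⟩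
  have hne : (p : ℝ) * κ * y 0 ^ p * exp (p * κ * b) ≠ 0 :=
    mul_ne_zero (mul_ne_zero (mul_ne_zero (by positivity) hκ) (pow_ne_zero p hy₀)) (exp_ne_zero _)
  exact hne (by linear_combination hclosed - (p * y b ^ p) * hesc)

theorem inv_pow_mem_Ioo_of_lt_root {p : ℕ} (hpo : Odd p) {κ lam c y₀ : ℝ} (hlam : lam < 0)
    (hc : c < 0) (hroot : κ + lam * c ^ p = 0) (hy₀ : y₀ < c) :
    (y₀ ^ p)⁻¹ ∈ Ioo (lam / -κ) 0 := by
  have hcp : c ^ p < 0 := hpo.pow_neg hc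
  have hyc : y₀ ^ p < c ^ p := hpo.strictMono_pow hy₀
  have hc_inv : (c ^ p)⁻¹ = lam / -κ := by
    rw [inv_eq_iff_eq_inv, inv_div, eq_div_iff hlam.ne]
    linarith
  exact ⟨hc_inv ▸ (inv_lt_inv_of_neg hcp (hyc.trans hcp)).mpr hyc,
    inv_lt_zero.mpr (hyc.trans hcp)⟩

/-- Finite-time blow-down to −∞ for an odd-p mode with y₀ < c < 0. -/
theorem stmt_16 (p : ℕ) (hp : 1 ≤ p) (hpo : Odd p)
    (κ : ℝ) (hκ : κ < 0) (α : ℝ) (hα : α = -κ)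
    (lam : ℝ) (hlam : lam < 0)
    (c : ℝ) (hcneg : c < 0) (hc : κ + lam * c ^ p = 0)
    (y₀ : ℝ) (hy₀ : y₀ < c)
    (T : ℝ)
    (hT : T = (1 / ((p : ℝ) * α)) *
      Real.log ((lam / α) / (lam / α - y₀ ^ (-(p : ℤ))))) :
    lam / α < y₀ ^ (-(p : ℤ)) ∧ y₀ ^ (-(p : ℤ)) < 0 ∧ 0 < T ∧
      ¬ ∃ y : ℝ → ℝ, y 0 = y₀ ∧
        ∀ t ∈ Set.Icc (0 : ℝ) T,
          HasDerivWithinAt y (κ * y t + lam * y t ^ (p + 1)) (Set.Icc (0 : ℝ) T) t := by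
  subst hα
  have hp₀ : (0 : ℝ) < p := by exact_mod_cast hp
  rw [zpow_neg, zpow_natCast] at hT ⊢
  obtain ⟨hlow, hneg⟩ := inv_pow_mem_Ioo_of_lt_root hpo hlam hcneg hc hy₀
  have hratio : 1 < lam / -κ / (lam / -κ - (y₀ ^ p)⁻¹) := by
    rw [lt_div_iff_of_neg (by linarith)]
    linarith
  have hT₀ : 0 < T := hT ▸ mul_pos (by have := neg_pos.mpr hκ; positivity) (log_pos hratio)
  refine ⟨hlow, hneg, hT₀, ?_⟩
  rintro ⟨y, rfl, hy⟩
  have hv₀ : y 0 ^ p ≠ 0 := fun h => by simp [h] at hneg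
  refine not_forall_hasDerivWithinAt_of_escape p hκ.ne ((pow_ne_zero_iff (by omega)).mp hv₀)
    hT₀.le ?_ hy
  have hκ₀ := hκ.ne
  have hlam₀ := hlam.ne
  have hpκT : p * κ * T = -log (lam / -κ / (lam / -κ - (y 0 ^ p)⁻¹)) := by
    rw [hT]
    field_simp
  rw [hpκT, exp_neg, exp_log (by linarith), inv_div]
  field_simp
  ring
end

section
/- Let p ≥ 2 be an even integer, κ < 0, λ > 0, and d̄ > 0, and set c_* := (−κ/λ)^{1/p}. Suppose c̃ ∈ (0, c_*) satisfies λ·c̃^{p+1} + κ·c̃ + d̄ = 0. Let d : [0,∞) → ℝ be a function with |d(t)| ≤ d̄ for all t ≥ 0, and let y : [0,∞) → ℝ be differentiable with ẏ(t) = κ·y(t) + λ·y(t)^{p+1} + d(t) for all t ≥ 0 and |y(0)| ≤ c̃. Then |y(t)| ≤ c̃ for all t ≥ 0, i.e., the interval [−c̃, c̃] is forward invariant for the disturbed mode. -/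
open Set Filter
open scoped Topology

private lemma pow_sub_pow_le_aux {x y M : ℝ} (n : ℕ) (h0 : 0 ≤ y) (hxy : y ≤ x) (hxM : x ≤ M) :
    x ^ n - y ^ n ≤ (n : ℝ) * M ^ (n - 1) * (x - y) := by
  have h0x : 0 ≤ x := h0.trans hxy
  have h0M : 0 ≤ M := h0x.trans hxM
  rw [← geom_sum₂_mul]
  have hsum : (∑ i ∈ Finset.range n, x ^ i * y ^ (n - 1 - i)) ≤ (n : ℝ) * M ^ (n - 1) := by
    calc (∑ i ∈ Finset.range n, x ^ i * y ^ (n - 1 - i))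
        ≤ ∑ i ∈ Finset.range n, M ^ (n - 1) := by
          refine Finset.sum_le_sum fun i hi => ?_
          have hi' : i < n := Finset.mem_range.1 hi
          have h1 : x ^ i ≤ M ^ i := pow_le_pow_left₀ h0x hxM i
          have h2 : y ^ (n - 1 - i) ≤ M ^ (n - 1 - i) :=
            pow_le_pow_left₀ h0 (hxy.trans hxM) _
          calc x ^ i * y ^ (n - 1 - i) ≤ M ^ i * M ^ (n - 1 - i) := by
                exact mul_le_mul h1 h2 (pow_nonneg h0 _) (pow_nonneg h0M _)
            _ = M ^ (i + (n - 1 - i)) := (pow_add M i _).symm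
            _ = M ^ (n - 1) := by congr 1; omega
      _ = (n : ℝ) * M ^ (n - 1) := by simp [Finset.sum_const, mul_comm]
  exact mul_le_mul_of_nonneg_right hsum (sub_nonneg.2 hxy)

private lemma aux_upper (p : ℕ) (κ lam dbar ctil : ℝ) (hκ : κ ≤ 0) (hlam : 0 ≤ lam)
    (hctil0 : 0 ≤ ctil)
    (hroot : lam * ctil ^ (p + 1) + κ * ctil + dbar ≤ 0)
    (d : ℝ → ℝ) (hdbd : ∀ t : ℝ, 0 ≤ t → d t ≤ dbar)
    (y : ℝ → ℝ)
    (hy : ∀ t : ℝ, 0 ≤ t → HasDerivAt y (κ * y t + lam * y t ^ (p + 1) + d t) t)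
    (hy0 : y 0 ≤ ctil) :
    ∀ t : ℝ, 0 ≤ t → y t ≤ ctil := by
  intro t ht
  by_contra hlt
  push_neg at hlt
  -- continuity of y on [0, ∞)
  have hconty : ContinuousOn y (Ici 0) := fun s hs => ((hy s hs).continuousAt).continuousWithinAt
  have hcontIcc : ContinuousOn y (Icc 0 t) := hconty.mono Icc_subset_Ici_self
  set A : Set ℝ := Icc 0 t ∩ y ⁻¹' (Iic ctil) with hA
  have hA_closed : IsClosed A := hcontIcc.preimage_isClosed_of_isClosed isClosed_Icc isClosed_Iic
  have h0A : (0 : ℝ) ∈ A := ⟨⟨le_refl 0, ht⟩, hy0⟩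
  have hA_bdd : BddAbove A := (bddAbove_Icc (a := 0) (b := t)).mono inter_subset_left
  set t₀ := sSup A with ht₀def
  have ht₀A : t₀ ∈ A := hA_closed.csSup_mem ⟨0, h0A⟩ hA_bdd
  have ht₀0 : 0 ≤ t₀ := ht₀A.1.1
  have ht₀t : t₀ ≤ t := ht₀A.1.2
  have hyt₀ : y t₀ ≤ ctil := ht₀A.2
  have ht₀lt : t₀ < t := lt_of_le_of_ne ht₀t (by intro h; rw [h] at hyt₀; exact absurd hyt₀ (not_le.2 hlt))
  have hmid : ∀ s, t₀ < s → s ≤ t → ctil < y s := by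
    intro s hs1 hs2
    by_contra hns
    push_neg at hns
    have : s ∈ A := ⟨⟨ht₀0.trans hs1.le, hs2⟩, hns⟩
    exact absurd (le_csSup hA_bdd this) (not_le.2 hs1)
  have hyt₀eq : y t₀ = ctil := by
    rcases eq_or_lt_of_le hyt₀ with h | h
    · exact h
    · exfalso
      have hc : ContinuousAt y t₀ := (hy t₀ ht₀0).continuousAt
      have hev : ∀ᶠ s in 𝓝 t₀, y s < ctil := hc.eventually_lt continuousAt_const h
      have hev' : ∀ᶠ s in 𝓝[>] t₀, y s < ctil := hev.filter_mono nhdsWithin_le_nhds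
      have hIoo : Ioo t₀ t ∈ 𝓝[>] t₀ := Ioo_mem_nhdsGT_of_mem ⟨le_refl _, ht₀lt⟩
      obtain ⟨s, hs1, hs2⟩ := (hev'.and (eventually_of_mem hIoo fun x h => h)).exists
      exact absurd hs1 (not_lt.2 (hmid s hs2.1 hs2.2.le).le)
  -- bound for y on [t₀, t]
  obtain ⟨C, hC⟩ := (isCompact_Icc (a := t₀) (b := t)).exists_bound_of_continuousOn
    (hcontIcc.mono (Icc_subset_Icc ht₀0 le_rfl))
  set M : ℝ := max C ctil with hMdef
  have hMc : ctil ≤ M := le_max_right _ _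
  have hM0 : 0 ≤ M := hctil0.trans hMc
  have hyM : ∀ s ∈ Icc t₀ t, y s ≤ M :=
    fun s hs => (le_abs_self _).trans ((hC s hs).trans (le_max_left _ _))
  have hylb : ∀ s ∈ Icc t₀ t, ctil ≤ y s := by
    rintro s ⟨hs1, hs2⟩
    rcases eq_or_lt_of_le hs1 with h | h
    · rw [← h, hyt₀eq]
    · exact (hmid s h hs2).le
  set K : ℝ := lam * ((p + 1 : ℕ) : ℝ) * M ^ p with hKdef
  set f : ℝ → ℝ := fun s => y s - ctil with hfdef
  set f' : ℝ → ℝ := fun s => κ * y s + lam * y s ^ (p + 1) + d s with hf'def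
  have hIccsub : Icc t₀ t ⊆ Ici 0 := fun s hs => ht₀0.trans hs.1
  have key : ∀ x ∈ Icc t₀ t, f x ≤ gronwallBound 0 K 0 (x - t₀) := by
    apply le_gronwallBound_of_liminf_deriv_right_le
    · exact (hconty.mono hIccsub).sub continuousOn_const
    · intro x hx r hr
      have hd : HasDerivAt f (f' x) x := ((hy x (ht₀0.trans hx.1)).sub_const ctil)
      have hslope := hasDerivAt_iff_tendsto_slope.1 hd
      have : Tendsto (slope f x) (𝓝[>] x) (𝓝 (f' x)) :=
        hslope.mono_left (nhdsWithin_mono x fun z hz => ne_of_gt hz)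
      have hev : ∀ᶠ z in 𝓝[>] x, slope f x z < r := this.eventually (eventually_lt_nhds hr)
      refine (hev.mono fun z hz => ?_).frequently
      rwa [slope_def_field, div_eq_inv_mul] at hz
    · simp [hfdef, hyt₀eq]
    · intro x hx
      have hx' : x ∈ Icc t₀ t := ⟨hx.1, hx.2.le⟩
      have h1 : ctil ≤ y x := hylb x hx'
      have h2 : y x ≤ M := hyM x hx'
      have hdx : d x ≤ dbar := hdbd x (ht₀0.trans hx.1)
      have hpow : y x ^ (p + 1) - ctil ^ (p + 1) ≤ ((p + 1 : ℕ) : ℝ) * M ^ p * (y x - ctil) := by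
        have := pow_sub_pow_le_aux (x := y x) (y := ctil) (M := M) (p + 1) hctil0 h1 h2
        simpa using this
      have hκterm : κ * y x - κ * ctil ≤ 0 := by
        have : κ * y x ≤ κ * ctil := mul_le_mul_of_nonpos_left h1 hκ
        linarith
      have hlamterm : lam * y x ^ (p + 1) - lam * ctil ^ (p + 1) ≤ K * (y x - ctil) := by
        have := mul_le_mul_of_nonneg_left hpow hlam
        calc lam * y x ^ (p + 1) - lam * ctil ^ (p + 1)
            = lam * (y x ^ (p + 1) - ctil ^ (p + 1)) := by ring
          _ ≤ lam * (((p + 1 : ℕ) : ℝ) * M ^ p * (y x - ctil)) := this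
          _ = K * (y x - ctil) := by rw [hKdef]; ring
      have : f' x ≤ K * f x := by
        have hroot' : lam * ctil ^ (p + 1) + κ * ctil ≤ -dbar := by linarith
        simp only [hf'def, hfdef]
        nlinarith [hκterm, hlamterm]
      simpa using this
  have hft := key t ⟨ht₀t, le_refl t⟩
  rw [gronwallBound_ε0_δ0] at hft
  simp only [hfdef] at hft
  linarith

/-- Robust forward invariance of [−c̃, c̃] for a destabilizing even-p mode
under matched bounded disturbances. -/
theorem stmt_17 (p : ℕ) (hp : 2 ≤ p) (hpe : Even p)
    (κ lam dbar : ℝ) (hκ : κ < 0) (hlam : 0 < lam) (hd : 0 < dbar)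
    (cstar : ℝ) (hcstar : cstar = ((-κ) / lam) ^ ((1 : ℝ) / (p : ℝ)))
    (ctil : ℝ) (hctil0 : 0 < ctil) (hctil1 : ctil < cstar)
    (hroot : lam * ctil ^ (p + 1) + κ * ctil + dbar = 0)
    (d : ℝ → ℝ) (hdbd : ∀ t : ℝ, 0 ≤ t → |d t| ≤ dbar)
    (y : ℝ → ℝ)
    (hy : ∀ t : ℝ, 0 ≤ t → HasDerivAt y (κ * y t + lam * y t ^ (p + 1) + d t) t)
    (hy0 : |y 0| ≤ ctil) :
    ∀ t : ℝ, 0 ≤ t → |y t| ≤ ctil := by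
  have hroot' : lam * ctil ^ (p + 1) + κ * ctil + dbar ≤ 0 := le_of_eq hroot
  have hodd : Odd (p + 1) := Even.add_one hpe
  have hub : ∀ t : ℝ, 0 ≤ t → y t ≤ ctil :=
    aux_upper p κ lam dbar ctil hκ.le hlam.le hctil0.le hroot' d
      (fun t ht => (abs_le.1 (hdbd t ht)).2) y hy (abs_le.1 hy0).2
  have hlb : ∀ t : ℝ, 0 ≤ t → -(y t) ≤ ctil := by
    apply aux_upper p κ lam dbar ctil hκ.le hlam.le hctil0.le hroot'
      (fun t => -(d t)) (fun t ht => neg_le.1 (abs_le.1 (hdbd t ht)).1)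
    · intro t ht
      have := (hy t ht).neg
      have heq : -(κ * y t + lam * y t ^ (p + 1) + d t)
          = κ * (-(y t)) + lam * (-(y t)) ^ (p + 1) + -(d t) := by
        rw [hodd.neg_pow]; ring
      rw [heq] at this
      exact this
    · exact neg_le.1 (abs_le.1 hy0).1
  exact fun t ht => abs_le.2 ⟨by linarith [hlb t ht], hub t ht⟩
end

section
/- Let p ≥ 2 be an even integer, κ < 0, λ ≤ 0, and d̄ > 0. Then the function φ(s) := λ·s^{p+1} + κ·s + d̄ is strictly decreasing on [0, ∞) and has a unique root ĉ ≥ 0 (namely ĉ = d̄/(−κ) when λ = 0). Moreover, for every function d : [0,∞) → ℝ with |d(t)| ≤ d̄ for all t ≥ 0 and every differentiable y : [0,∞) → ℝ with ẏ(t) = κ·y(t) + λ·y(t)^{p+1} + d(t) for all t ≥ 0, the interval [−ĉ, ĉ] is forward invariant and limsup_{t→∞} |y(t)| ≤ ĉ. -/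
open Filter Set Topology

/-- If `y' t < 0` whenever `y t = c` (for `t ≥ a`), and `y a ≤ c`, then `y t ≤ c` for `t ≥ a`. -/
lemma upper_invariant {y f : ℝ → ℝ} {a c : ℝ}
    (hderiv : ∀ t, a ≤ t → HasDerivAt y (f t) t)
    (hbd : ∀ t, a ≤ t → y t = c → f t < 0)
    (h0 : y a ≤ c) : ∀ t, a ≤ t → y t ≤ c := by
  intro t₁ ht₁
  by_contra hyc
  push_neg at hyc
  have hcont : ContinuousOn y (Icc a t₁) := fun t ht =>
    ((hderiv t ht.1).continuousAt).continuousWithinAt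
  set S : Set ℝ := Icc a t₁ ∩ y ⁻¹' (Iic c) with hS
  have hSne : S.Nonempty := ⟨a, ⟨le_refl a, ht₁⟩, h0⟩
  have hSbdd : BddAbove S := BddAbove.mono (fun t ht => ht.1) bddAbove_Icc
  have hSclosed : IsClosed S := hcont.preimage_isClosed_of_isClosed isClosed_Icc isClosed_Iic
  set t₀ := sSup S with ht₀def
  have ht₀S : t₀ ∈ S := hSclosed.csSup_mem hSne hSbdd
  have ht₀a : a ≤ t₀ := ht₀S.1.1
  have ht₀t₁ : t₀ ≤ t₁ := ht₀S.1.2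
  have hyt₀ : y t₀ ≤ c := ht₀S.2
  have ht₀lt : t₀ < t₁ := lt_of_le_of_ne ht₀t₁ (fun h => by
    rw [h] at hyt₀; exact absurd hyt₀ (not_le.2 hyc))
  rcases eq_or_lt_of_le hyt₀ with heq | hlt
  · have hf := hbd t₀ ht₀a heq
    have hslope := (hasDerivAt_iff_tendsto_slope.1 (hderiv t₀ ht₀a))
    have hneg : ∀ᶠ s in 𝓝[≠] t₀, slope y t₀ s < 0 :=
      hslope.eventually (Filter.Tendsto.eventually_lt_const hf tendsto_id) |>.mono (fun s hs => hs)
    have hneg' : ∀ᶠ s in 𝓝[>] t₀, slope y t₀ s < 0 :=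
      hneg.filter_mono (nhdsWithin_mono t₀ (fun s hs => ne_of_gt hs))
    have hmem : Ioo t₀ t₁ ∈ 𝓝[>] t₀ := Ioo_mem_nhdsGT_of_mem ⟨le_refl _, ht₀lt⟩
    obtain ⟨s, hs1, hs2⟩ := (hneg'.and (eventually_of_mem hmem (fun s hs => hs))).exists
    have hst : t₀ < s := hs2.1
    have : y s - y t₀ < 0 := by
      have h1 : (y s - y t₀) / (s - t₀) < 0 := by
        have := hs1; rw [slope_def_field] at this; simpa using this
      by_contra hcon
      push_neg at hcon
      have : 0 ≤ (y s - y t₀) / (s - t₀) := div_nonneg hcon (by linarith)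
      linarith
    have hsS : s ∈ S := ⟨⟨le_trans ht₀a hst.le, hs2.2.le⟩, by
      simp only [mem_preimage, mem_Iic]; linarith [heq ▸ this]⟩
    exact absurd (le_csSup hSbdd hsS) (not_le.2 hst)
  · have hcont' : ContinuousOn y (Icc t₀ t₁) := hcont.mono (Icc_subset_Icc ht₀a (le_refl _))
    have : c ∈ Icc (y t₀) (y t₁) := ⟨hlt.le, hyc.le⟩
    obtain ⟨s, hs, hys⟩ := intermediate_value_Icc ht₀t₁ hcont' this
    have hst : t₀ < s := lt_of_le_of_ne hs.1 (fun h => by rw [← h] at hys; linarith)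
    have hsS : s ∈ S := ⟨⟨le_trans ht₀a hs.1, hs.2⟩, le_of_eq hys⟩
    exact absurd (le_csSup hSbdd hsS) (not_le.2 hst)

/-- If `y' ≤ -δ` on `[a,∞)` then `y t + δ t ≤ y a + δ a` there. -/
lemma decrease_lin {y f : ℝ → ℝ} {a δ : ℝ}
    (hderiv : ∀ t, a ≤ t → HasDerivAt y (f t) t)
    (hf : ∀ t, a ≤ t → f t ≤ -δ) :
    ∀ t, a ≤ t → y t + δ * t ≤ y a + δ * a := by
  have hg : ∀ t, a ≤ t → HasDerivAt (fun s => y s + δ * s) (f t + δ) t := fun t ht =>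
    (hderiv t ht).add (by simpa using (hasDerivAt_id t).const_mul δ)
  have hA : AntitoneOn (fun s => y s + δ * s) (Ici a) := by
    apply antitoneOn_of_deriv_nonpos (convex_Ici a)
    · exact fun t ht => (hg t ht).continuousAt.continuousWithinAt
    · intro t ht
      rw [interior_Ici] at ht
      exact (hg t (le_of_lt ht)).differentiableAt.differentiableWithinAt
    · intro t ht
      rw [interior_Ici] at ht
      rw [(hg t (le_of_lt ht)).deriv]
      linarith [hf t (le_of_lt ht)]
  exact fun t ht => hA (self_mem_Ici) ht ht

/-- For a stabilizing even-p mode (λ ≤ 0), φ(s) = λs^{p+1} + κs + d̄ is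
strictly decreasing on [0,∞) with a unique nonnegative root ĉ, the interval [−ĉ, ĉ]
is forward invariant under matched bounded disturbances, and limsup |y(t)| ≤ ĉ. -/
theorem stmt_18 (p : ℕ) (hp : 2 ≤ p) (hpe : Even p)
    (κ lam dbar : ℝ) (hκ : κ < 0) (hlam : lam ≤ 0) (hd : 0 < dbar) :
    StrictAntiOn (fun s : ℝ => lam * s ^ (p + 1) + κ * s + dbar) (Set.Ici (0 : ℝ))
    ∧ ∃ chat : ℝ, 0 ≤ chat
      ∧ lam * chat ^ (p + 1) + κ * chat + dbar = 0
      ∧ (∀ c' : ℝ, 0 ≤ c' → lam * c' ^ (p + 1) + κ * c' + dbar = 0 → c' = chat)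
      ∧ (lam = 0 → chat = dbar / (-κ))
      ∧ ∀ (d y : ℝ → ℝ),
          (∀ t : ℝ, 0 ≤ t → |d t| ≤ dbar) →
          (∀ t : ℝ, 0 ≤ t → HasDerivAt y (κ * y t + lam * y t ^ (p + 1) + d t) t) →
          (|y 0| ≤ chat → ∀ t : ℝ, 0 ≤ t → |y t| ≤ chat)
          ∧ Filter.limsup (fun t => |y t|) Filter.atTop ≤ chat := by
  have hodd : Odd (p + 1) := hpe.add_one
  set φ : ℝ → ℝ := fun s => lam * s ^ (p + 1) + κ * s + dbar with hφdef
  have hanti : StrictAntiOn φ (Set.Ici (0 : ℝ)) := by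
    intro a ha b hb hab
    simp only [hφdef]
    have h1 : lam * b ^ (p + 1) ≤ lam * a ^ (p + 1) :=
      mul_le_mul_of_nonpos_left (pow_le_pow_left₀ ha hab.le _) hlam
    nlinarith [mul_lt_mul_of_neg_left hab hκ]
  refine ⟨hanti, ?_⟩
  have hκ0 : κ ≠ 0 := ne_of_lt hκ
  set M : ℝ := dbar / (-κ) with hMdef
  have hM : 0 < M := div_pos hd (neg_pos.2 hκ)
  have hκM : κ * M = -dbar := by
    have h1 : M * (-κ) = dbar := div_mul_cancel₀ _ (neg_ne_zero.2 hκ0)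
    linear_combination -h1
  have hφM : φ M ≤ 0 := by
    have hMp : (0:ℝ) ≤ M ^ (p + 1) := pow_nonneg hM.le _
    have := mul_nonpos_of_nonpos_of_nonneg hlam hMp
    simp only [hφdef]; linarith
  have hφ0 : φ 0 = dbar := by simp [hφdef]
  have hφcont : Continuous φ := by fun_prop
  obtain ⟨chat, hchatmem, hchat⟩ :=
    intermediate_value_Icc' hM.le hφcont.continuousOn ⟨hφM, by rw [hφ0]; exact hd.le⟩
  have hchat0 : 0 ≤ chat := hchatmem.1
  have hφneg : ∀ c, chat < c → φ c < 0 := fun c hc => by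
    have := hanti (mem_Ici.2 hchat0) (mem_Ici.2 (le_trans hchat0 hc.le)) hc
    rw [hchat] at this; exact this
  refine ⟨chat, hchat0, hchat, ?_, ?_, ?_⟩
  · intro c' hc' hroot
    exact hanti.injOn (mem_Ici.2 hc') (mem_Ici.2 hchat0) (by rw [hchat]; exact hroot)
  · intro hlam0
    simp only [hφdef, hlam0, zero_mul, zero_add] at hchat
    rw [eq_div_iff (neg_ne_zero.2 hκ0)]
    linear_combination -hchat
  · intro d y hdb hy
    set f : ℝ → ℝ := fun t => κ * y t + lam * y t ^ (p + 1) + d t with hfdef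
    -- upper-boundary push: if y t = c with chat < c then f t < 0
    have hbdU : ∀ c, chat < c → ∀ t, 0 ≤ t → y t = c → f t < 0 := by
      intro c hc t ht hyt
      have hdt : d t ≤ dbar := (abs_le.1 (hdb t ht)).2
      have : f t ≤ φ c := by simp only [hfdef, hφdef, hyt]; linarith
      linarith [hφneg c hc]
    -- lower-boundary push: if y t = -c with chat < c then f t > 0
    have hbdL : ∀ c, chat < c → ∀ t, 0 ≤ t → y t = -c → 0 < f t := by
      intro c hc t ht hyt
      have hdt : -dbar ≤ d t := (abs_le.1 (hdb t ht)).1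
      have hpow : (-c) ^ (p + 1) = -(c ^ (p + 1)) := hodd.neg_pow c
      have : -(φ c) ≤ f t := by
        simp only [hfdef, hφdef, hyt, hpow]; ring_nf; linarith
      linarith [hφneg c hc]
    have hyneg : ∀ t, 0 ≤ t → HasDerivAt (fun s => -(y s)) (-(f t)) t := fun t ht =>
      ((hy t ht).neg)
    -- invariance part
    constructor
    · intro h0 t ht
      rw [abs_le]
      have key : ∀ ε : ℝ, 0 < ε → -(chat + ε) ≤ y t ∧ y t ≤ chat + ε := by
        intro ε hε
        have hc : chat < chat + ε := by linarith
        have hU : y t ≤ chat + ε := by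
          refine upper_invariant hy (hbdU _ hc) ?_ t ht
          have := (abs_le.1 h0).2; linarith
        have hL : -(y t) ≤ chat + ε := by
          refine upper_invariant hyneg (fun s hs hys => ?_) ?_ t ht
          · have hys' : y s = -(chat + ε) := by
              have h2 : -(y s) = chat + ε := hys
              linarith
            have := hbdL _ hc s hs hys'
            show -(f s) < 0
            linarith
          · show -(y 0) ≤ chat + ε
            linarith [(abs_le.1 h0).1]
        exact ⟨by linarith, hU⟩
      constructor
      · by_contra hcon; push_neg at hcon
        have hε : 0 < (-chat - y t) / 2 := by linarith
        linarith [(key _ hε).1]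
      · by_contra hcon; push_neg at hcon
        have hε : 0 < (y t - chat) / 2 := by linarith
        linarith [(key _ hε).2]
    -- limsup part
    · have hev : ∀ ε : ℝ, 0 < ε → ∀ᶠ t in atTop, |y t| ≤ chat + ε := by
        intro ε hε
        have hc : chat < chat + ε := by linarith
        set δ : ℝ := -(φ (chat + ε)) with hδdef
        have hδ : 0 < δ := by simp only [hδdef]; linarith [hφneg _ hc]
        -- eventually y t ≤ chat + ε
        have hUp : ∃ T : ℝ, 0 ≤ T ∧ ∀ t, T ≤ t → y t ≤ chat + ε := by
          by_cases hstart : ∃ T : ℝ, 0 ≤ T ∧ y T ≤ chat + ε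
          · obtain ⟨T, hT0, hT⟩ := hstart
            exact ⟨T, hT0, fun t ht =>
              upper_invariant (fun s hs => hy s (le_trans hT0 hs))
                (fun s hs => hbdU _ hc s (le_trans hT0 hs)) hT t ht⟩
          · exfalso
            push_neg at hstart
            have hfle : ∀ t, (0:ℝ) ≤ t → f t ≤ -δ := by
              intro t ht
              have hyt : chat + ε < y t := hstart t ht
              have hmono : φ (y t) ≤ φ (chat + ε) :=
                (hanti.antitoneOn) (mem_Ici.2 (by linarith)) (mem_Ici.2 (by linarith)) hyt.le
              have hdt : d t ≤ dbar := (abs_le.1 (hdb t ht)).2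
              have : f t ≤ φ (y t) := by simp only [hfdef, hφdef]; linarith
              simp only [hδdef]; linarith
            have hdec := decrease_lin hy hfle
            obtain ⟨T, hTdef⟩ : ∃ T : ℝ, T = (y 0 - chat - ε) / δ + 1 := ⟨_, rfl⟩
            have hT0 : 0 ≤ T := by
              have h00 : chat + ε < y 0 := hstart 0 le_rfl
              have : 0 < (y 0 - chat - ε) / δ := div_pos (by linarith) hδ
              linarith
            have hdecT : y T + δ * T ≤ y 0 + δ * 0 := hdec T hT0
            have hδT : y 0 - chat - ε < δ * T := by
              rw [hTdef, mul_add, mul_one, mul_div_cancel₀ _ (ne_of_gt hδ)]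
              linarith
            have := hstart T hT0
            linarith
        -- eventually -y t ≤ chat + ε
        have hLow : ∃ T : ℝ, 0 ≤ T ∧ ∀ t, T ≤ t → -(y t) ≤ chat + ε := by
          have hbdL' : ∀ s, 0 ≤ s → -(y s) = chat + ε → -(f s) < 0 := by
            intro s hs hys
            have : y s = -(chat + ε) := by linarith
            simpa using (hbdL _ hc s hs this)
          by_cases hstart : ∃ T : ℝ, 0 ≤ T ∧ -(y T) ≤ chat + ε
          · obtain ⟨T, hT0, hT⟩ := hstart
            exact ⟨T, hT0, fun t ht =>
              upper_invariant (fun s hs => hyneg s (le_trans hT0 hs))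
                (fun s hs => hbdL' s (le_trans hT0 hs)) hT t ht⟩
          · exfalso
            push_neg at hstart
            have hfle : ∀ t, (0:ℝ) ≤ t → -(f t) ≤ -δ := by
              intro t ht
              have hyt : chat + ε < -(y t) := hstart t ht
              have hpow : (y t) ^ (p + 1) = -((-(y t)) ^ (p + 1)) := by
                rw [hodd.neg_pow]; ring
              have hmono : φ (-(y t)) ≤ φ (chat + ε) :=
                (hanti.antitoneOn) (mem_Ici.2 (by linarith)) (mem_Ici.2 (by linarith)) hyt.le
              have hdt : -dbar ≤ d t := (abs_le.1 (hdb t ht)).1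
              have : -(f t) ≤ φ (-(y t)) := by
                simp only [hfdef, hφdef, hpow]; ring_nf; nlinarith [hmono]
              simp only [hδdef]; linarith
            have hdec := decrease_lin hyneg hfle
            obtain ⟨T, hTdef⟩ : ∃ T : ℝ, T = (-(y 0) - chat - ε) / δ + 1 := ⟨_, rfl⟩
            have hT0 : 0 ≤ T := by
              have h00 : chat + ε < -(y 0) := hstart 0 le_rfl
              have : 0 < (-(y 0) - chat - ε) / δ := div_pos (by linarith) hδ
              linarith
            have hdecT : -(y T) + δ * T ≤ -(y 0) + δ * 0 := hdec T hT0
            have hδT : -(y 0) - chat - ε < δ * T := by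
              rw [hTdef, mul_add, mul_one, mul_div_cancel₀ _ (ne_of_gt hδ)]
              linarith
            have hTy := hstart T hT0
            linarith
        obtain ⟨T1, _, hT1⟩ := hUp
        obtain ⟨T2, _, hT2⟩ := hLow
        filter_upwards [eventually_ge_atTop (max T1 T2)] with t ht
        rw [abs_le]
        exact ⟨by linarith [hT2 t (le_trans (le_max_right T1 T2) ht)],
          hT1 t (le_trans (le_max_left T1 T2) ht)⟩
      have hcob : IsCoboundedUnder (· ≤ ·) atTop (fun t => |y t|) :=
        isCoboundedUnder_le_of_le atTop (fun t => abs_nonneg (y t))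
      refine le_of_forall_pos_le_add ?_
      intro ε hε
      exact limsup_le_of_le hcob (hev ε hε)
end

section
/- Let p ≥ 2 be an even integer, κ < 0, λ ∈ ℝ, c̄ > 0 and suppose α := −(κ + max{λ, 0}·c̄^p) > 0. Let d : [0,∞) → ℝ be a bounded function and let y : [0,∞) → ℝ be differentiable with ẏ(t) = κ·y(t) + λ·y(t)^{p+1} + d(t) for all t ≥ 0 and |y(t)| ≤ c̄ for all t ≥ 0. Then the ISS-type estimate |y(t)| ≤ e^{−α t}·|y(0)| + ((1 − e^{−α t})/α)·sup_{s ≥ 0} |d(s)| holds for all t ≥ 0; in particular the mode is input-to-state stable on the invariant interval [−c̄, c̄], with linear ISS gain s ↦ s/α. -/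
open Topology Filter


/-- ISS-type estimate on the invariant interval [−c̄, c̄] for the disturbed
even-p mode. -/
theorem stmt_19 (p : ℕ) (hp : 2 ≤ p) (hpe : Even p)
    (κ lam cbar : ℝ) (hκ : κ < 0) (hcbar : 0 < cbar)
    (α : ℝ) (hα : α = -(κ + max lam 0 * cbar ^ p)) (hαpos : 0 < α)
    (d : ℝ → ℝ) (hdbdd : ∃ D : ℝ, ∀ s : ℝ, |d s| ≤ D)
    (y : ℝ → ℝ)
    (hy : ∀ t : ℝ, 0 ≤ t → HasDerivAt y (κ * y t + lam * y t ^ (p + 1) + d t) t)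
    (hyin : ∀ t : ℝ, 0 ≤ t → |y t| ≤ cbar) :
    ∀ t : ℝ, 0 ≤ t →
      |y t| ≤ Real.exp (-α * t) * |y 0|
        + ((1 - Real.exp (-α * t)) / α) * ⨆ s : Set.Ici (0 : ℝ), |d s| := by
  set D : ℝ := ⨆ s : Set.Ici (0 : ℝ), |d s| with hDdef
  have hbdd : BddAbove (Set.range fun s : Set.Ici (0 : ℝ) => |d s|) := by
    obtain ⟨Db, hDb⟩ := hdbdd
    exact ⟨Db, by rintro _ ⟨s, rfl⟩; exact hDb s⟩
  have hD : ∀ s : ℝ, 0 ≤ s → |d s| ≤ D := fun s hs =>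
    le_ciSup hbdd (⟨s, hs⟩ : Set.Ici (0 : ℝ))
  -- drift inequality
  have hdrift : ∀ x : ℝ, 0 ≤ x →
      y x * (κ * y x + lam * y x ^ (p + 1) + d x) ≤ -α * y x ^ 2 + |y x| * D := by
    intro x hx
    have hyc := hyin x hx
    have hdc := hD x hx
    have hyp : y x ^ p = |y x| ^ p := (abs_pow (y x) p ▸ (abs_of_nonneg (hpe.pow_nonneg _)).symm)
    have h1 : |y x| ^ p ≤ cbar ^ p := pow_le_pow_left₀ (abs_nonneg _) hyc p
    have h2 : lam ≤ max lam 0 := le_max_left _ _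
    have h3 : (0:ℝ) ≤ max lam 0 := le_max_right _ _
    have h4 : y x * d x ≤ |y x| * D := by
      calc y x * d x ≤ |y x * d x| := le_abs_self _
        _ = |y x| * |d x| := abs_mul _ _
        _ ≤ |y x| * D := by
            exact mul_le_mul_of_nonneg_left hdc (abs_nonneg _)
    have h5 : lam * y x ^ (p + 2) ≤ max lam 0 * cbar ^ p * y x ^ 2 := by
      have hnn : (0:ℝ) ≤ y x ^ p := hpe.pow_nonneg _
      have e1 : y x ^ (p + 2) = y x ^ p * y x ^ 2 := by ring
      have e2 : lam * y x ^ (p + 2) ≤ max lam 0 * y x ^ (p + 2) := by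
        have : (0:ℝ) ≤ y x ^ (p + 2) := by rw [e1]; positivity
        exact mul_le_mul_of_nonneg_right h2 this
      have e3 : max lam 0 * y x ^ (p + 2) ≤ max lam 0 * (cbar ^ p * y x ^ 2) := by
        apply mul_le_mul_of_nonneg_left _ h3
        rw [e1]
        have : y x ^ p ≤ cbar ^ p := hyp ▸ h1
        exact mul_le_mul_of_nonneg_right this (sq_nonneg _)
      calc lam * y x ^ (p + 2) ≤ max lam 0 * y x ^ (p + 2) := e2
        _ ≤ max lam 0 * (cbar ^ p * y x ^ 2) := e3
        _ = max lam 0 * cbar ^ p * y x ^ 2 := by ring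
    have expand : y x * (κ * y x + lam * y x ^ (p + 1) + d x)
        = κ * y x ^ 2 + lam * y x ^ (p + 2) + y x * d x := by ring
    rw [expand, hα]
    nlinarith [sq_nonneg (y x)]
  intro t ht
  -- apply Gronwall on [0, t]
  have key := le_gronwallBound_of_liminf_deriv_right_le
    (f := fun u => |y u|) (f' := fun u => -α * |y u| + D)
    (δ := |y 0|) (K := -α) (ε := D) (a := 0) (b := t)
    (by
      intro u hu
      exact ((hy u hu.1).continuousAt.continuousWithinAt).abs)
    (by
      intro x hx r hr
      have hx0 : 0 ≤ x := hx.1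
      have hyd := hy x hx0
      have hmono : 𝓝[>] x ≤ 𝓝[≠] x :=
        nhdsWithin_mono _ fun z hz => ne_of_gt hz
      by_cases h0 : y x = 0
      · -- quotient tends to |d x| ≤ D < r
        have hr' : |d x| < r := by
          have : |d x| ≤ D := hD x hx0
          have hr2 : -α * |y x| + D < r := hr
          rw [h0] at hr2; simp at hr2; linarith
        have hslope : Filter.Tendsto (slope y x) (𝓝[≠] x)
            (𝓝 (κ * y x + lam * y x ^ (p + 1) + d x)) :=
          hasDerivAt_iff_tendsto_slope.1 hyd
        have hder0 : κ * y x + lam * y x ^ (p + 1) + d x = d x := by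
          rw [h0]; simp
        rw [hder0] at hslope
        have habs : Filter.Tendsto (fun z => |slope y x z|) (𝓝[>] x) (𝓝 |d x|) :=
          ((hslope.mono_left hmono).abs)
        have hev : ∀ᶠ z in 𝓝[>] x, |slope y x z| < r :=
          habs.eventually (gt_mem_nhds hr')
        have heq : ∀ᶠ z in 𝓝[>] x,
            (z - x)⁻¹ * (|y z| - |y x|) = |slope y x z| := by
          filter_upwards [self_mem_nhdsWithin] with z hz
          have hzx : 0 < z - x := sub_pos.2 hz
          rw [slope_def_field, h0, abs_zero, sub_zero, sub_zero, div_eq_inv_mul,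
            abs_mul, abs_of_pos (inv_pos.2 hzx)]
        apply Filter.Eventually.frequently
        filter_upwards [hev, heq] with z h1 h2
        rw [h2]; exact h1
      · -- |y| differentiable at x
        obtain hneg | hpos := Ne.lt_or_gt h0
        · -- y x < 0
          have habs : HasDerivAt (fun u => |y u|)
              ((-1) * (κ * y x + lam * y x ^ (p + 1) + d x)) x :=
            (hasDerivAt_abs_neg hneg).comp x hyd
          have hL : (-1) * (κ * y x + lam * y x ^ (p + 1) + d x) < r := by
            have hr2 : -α * |y x| + D < r := hr
            have hd := hdrift x hx0
            have hya : |y x| = -y x := abs_of_neg hneg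
            rw [hya] at hr2 hd
            nlinarith
          have hslope := hasDerivAt_iff_tendsto_slope.1 habs
          have hev : ∀ᶠ z in 𝓝[>] x, slope (fun u => |y u|) x z < r :=
            (hslope.mono_left hmono).eventually (gt_mem_nhds hL)
          apply Filter.Eventually.frequently
          filter_upwards [hev] with z hz
          rwa [slope_def_field, div_eq_inv_mul] at hz
        · -- y x > 0
          have habs : HasDerivAt (fun u => |y u|)
              (1 * (κ * y x + lam * y x ^ (p + 1) + d x)) x :=
            (hasDerivAt_abs_pos hpos).comp x hyd
          have hL : 1 * (κ * y x + lam * y x ^ (p + 1) + d x) < r := by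
            have hr2 : -α * |y x| + D < r := hr
            have hd := hdrift x hx0
            have hya : |y x| = y x := abs_of_pos hpos
            rw [hya] at hr2 hd
            nlinarith
          have hslope := hasDerivAt_iff_tendsto_slope.1 habs
          have hev : ∀ᶠ z in 𝓝[>] x, slope (fun u => |y u|) x z < r :=
            (hslope.mono_left hmono).eventually (gt_mem_nhds hL)
          apply Filter.Eventually.frequently
          filter_upwards [hev] with z hz
          rwa [slope_def_field, div_eq_inv_mul] at hz)
    le_rfl
    (by intro x _; exact le_rfl)
    t (Set.mem_Icc.2 ⟨ht, le_rfl⟩)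
  rw [sub_zero, gronwallBound_of_K_ne_0 (neg_ne_zero.2 (ne_of_gt hαpos))] at key
  have key' : |y t| ≤ |y 0| * Real.exp (-α * t) + D / (-α) * (Real.exp (-α * t) - 1) := key
  have heq : |y 0| * Real.exp (-α * t) + D / (-α) * (Real.exp (-α * t) - 1)
      = Real.exp (-α * t) * |y 0| + ((1 - Real.exp (-α * t)) / α) * D := by
    rw [div_neg]
    ring
  linarith
end
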